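/- arXiv:2204.01085 — 6 statements merged into one kernel-verified Lean document; each statement's English description precedes it below -/
import Mathlib

section
/- If q > 3, then multiplication in the Hall system H over the finite field F of order q is not commutative (there exist a, b ∈ H with a·b ≠ b·a), not associative (there exist a, b, c ∈ H with (a·b)·c ≠ a·(b·c)), and not left distributive over addition (there exist a, b, c ∈ H with a·(b + c) ≠ a·b + a·c). -/
/-!
All three laws already fail on elements built from `u = (0, 1)`. One computes
`u·(x, 1) = (s - x(x - r), r - x)`, `(x, 1)·u = (s, x + r)` and `u·u + u·(x, 0) = (s, r + x)`, so
commutativity and left distributivity fail for any `x ∉ {0, r}`. Also `(u·u)·(y, 0) = (s y, r y)`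
while `u·(u·(y, 0)) = (s / y, r)`, so associativity fails for `y ∉ {0, 1, -1}` once `s ≠ 0`, which
holds because `-s = f(0)` and the irreducible quadratic `f` has no roots. With `q > 3` such `x`
and `y` exist.
-/

open Polynomial

/-- The Hall system multiplication on `F × F`, with defining polynomial `x^2 - r*x - s`. -/
def hallMul {F : Type*} [Field F] [DecidableEq F] (r s : F) (a b : F × F) : F × F :=
  if b.2 = 0 then (a.1 * b.1, a.2 * b.1)
  else (a.1 * b.1 - a.2 * b.2⁻¹ * (b.1 ^ 2 - r * b.1 - s),
        a.1 * b.2 - a.2 * b.1 + a.2 * r)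

section HallMul

variable {F : Type*} [Field F] [DecidableEq F] (r s : F)

theorem hallMul_mk_zero (a : F × F) (y : F) : hallMul r s a (y, 0) = (a.1 * y, a.2 * y) :=
  if_pos rfl

theorem hallMul_of_snd_ne_zero (a : F × F) {b : F × F} (hb : b.2 ≠ 0) :
    hallMul r s a b = (a.1 * b.1 - a.2 * b.2⁻¹ * (b.1 ^ 2 - r * b.1 - s),
      a.1 * b.2 - a.2 * b.1 + a.2 * r) := if_neg hb

theorem hallMul_zero_one_mk_one (x : F) :
    hallMul r s (0, 1) (x, 1) = (s - x * (x - r), r - x) := by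
  rw [hallMul_of_snd_ne_zero r s _ one_ne_zero]
  ext <;> simp only [inv_one] <;> ring

theorem hallMul_zero_one_self : hallMul r s (0, 1) (0, 1) = (s, r) := by
  simpa using hallMul_zero_one_mk_one r s 0

theorem hallMul_mk_one_zero_one (x : F) : hallMul r s (x, 1) (0, 1) = (s, x + r) := by
  rw [hallMul_of_snd_ne_zero r s _ one_ne_zero]
  ext <;> simp

theorem hallMul_zero_one_comm_ne {x : F} (hx0 : x ≠ 0) (hxr : x ≠ r) :
    hallMul r s (0, 1) (x, 1) ≠ hallMul r s (x, 1) (0, 1) := by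
  simp [hallMul_zero_one_mk_one, hallMul_mk_one_zero_one, hx0, sub_eq_zero, hxr]

theorem hallMul_zero_one_left_distrib_ne {x : F} (hx0 : x ≠ 0) (hxr : x ≠ r) :
    hallMul r s (0, 1) ((0, 1) + (x, 0)) ≠
      hallMul r s (0, 1) (0, 1) + hallMul r s (0, 1) (x, 0) := by
  rw [Prod.mk_add_mk, zero_add, add_zero, hallMul_zero_one_mk_one, hallMul_zero_one_self,
    hallMul_mk_zero]
  simp [hx0, sub_eq_zero, hxr]

theorem hallMul_zero_one_assoc_ne (hs : s ≠ 0) {y : F} (hy0 : y ≠ 0) (hy1 : y ≠ 1)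
    (hym1 : y ≠ -1) :
    hallMul r s (hallMul r s (0, 1) (0, 1)) (y, 0) ≠
      hallMul r s (0, 1) (hallMul r s (0, 1) (y, 0)) := by
  rw [hallMul_zero_one_self, hallMul_mk_zero, hallMul_mk_zero,
    hallMul_of_snd_ne_zero r s _ (by simpa)]
  intro h
  have hfst : s * y = y⁻¹ * s := by simpa using congrArg Prod.fst h
  have hy_inv : y = y⁻¹ := mul_left_cancel₀ hs (hfst.trans (mul_comm _ _))
  have hy2 : y ^ 2 = 1 := by
    rw [sq]
    nth_rw 1 [hy_inv]
    exact inv_mul_cancel₀ hy0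
  exact (sq_eq_one_iff.1 hy2).elim hy1 hym1

end HallMul

theorem ne_zero_of_irreducible_X_sq_sub {F : Type*} [Field F] {r s : F}
    (hirr : Irreducible (X ^ 2 - C r * X - C s : F[X])) : s ≠ 0 := by
  rintro rfl
  refine hirr.not_isRoot_of_natDegree_ne_one ?_ (x := 0) (by simp)
  have hdeg : (X ^ 2 - C r * X - C 0 : F[X]).natDegree = 2 := by compute_degree!
  omega

/-- If `q > 3`, the Hall system multiplication is not commutative, not associative,
and not left distributive over addition. -/
theorem hall_not_comm_not_assoc_not_left_distrib {F : Type*} [Field F] [Fintype F] [DecidableEq F]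
    (q : ℕ) (hq : Fintype.card F = q) (hq3 : 3 < q) (r s : F)
    (hirr : Irreducible (X ^ 2 - C r * X - C s : F[X])) :
    (∃ a b : F × F, hallMul r s a b ≠ hallMul r s b a) ∧
    (∃ a b c : F × F, hallMul r s (hallMul r s a b) c ≠ hallMul r s a (hallMul r s b c)) ∧
    (∃ a b c : F × F, hallMul r s a (b + c) ≠ hallMul r s a b + hallMul r s a c) := by
  have avoid (t : Finset F) (ht : t.card ≤ 3) : ∃ x, x ∉ t := by
    obtain ⟨x, -, hx⟩ := Finset.exists_mem_notMem_of_card_lt_card (s := t) (t := Finset.univ)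
      (by rw [Finset.card_univ]; omega)
    exact ⟨x, hx⟩
  obtain ⟨x, hx⟩ := avoid {0, r} (Finset.card_le_two.trans (by norm_num))
  obtain ⟨y, hy⟩ := avoid {0, 1, -1} Finset.card_le_three
  simp only [Finset.mem_insert, Finset.mem_singleton, not_or] at hx hy
  exact ⟨⟨_, _, hallMul_zero_one_comm_ne r s hx.1 hx.2⟩,
    ⟨_, _, _, hallMul_zero_one_assoc_ne r s (ne_zero_of_irreducible_X_sq_sub hirr) hy.1 hy.2.1 hy.2.2⟩,
    ⟨_, _, _, hallMul_zero_one_left_distrib_ne r s hx.1 hx.2⟩⟩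
end

section
/- The set TR of all translations τ_{a,b} of the Hall affine plane A_H is a group under composition isomorphic to the additive group of H × H (equivalently, of the vector space F⁴); TR acts sharply transitively on the points of A_H (for any two points there is exactly one translation mapping the first to the second); every translation maps each line to a line parallel to it; and for any two parallel lines of A_H there is a translation mapping one onto the other. -/
open Polynomial

/-- Vertical line `[c] = {(c, y)}` in the Hall affine plane. -/
def vertLine {F : Type*} (c : F × F) : Set ((F × F) × (F × F)) := {P | P.1 = c}

/-- Non-vertical line `[m, k] = {(x, x·m + k)}` in the Hall affine plane. -/
def slopeLine {F : Type*} [Field F] [DecidableEq F] (r s : F) (m k : F × F) :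
    Set ((F × F) × (F × F)) :=
  {P | P.2 = hallMul r s P.1 m + k}

/-- The lines of the Hall affine plane `A_H`. -/
def IsHallLine {F : Type*} [Field F] [DecidableEq F] (r s : F)
    (ℓ : Set ((F × F) × (F × F))) : Prop :=
  (∃ c : F × F, ℓ = vertLine c) ∨ ∃ m k : F × F, ℓ = slopeLine r s m k

/-- A collineation of the Hall affine plane: a bijection of the point set mapping
every line onto a line. -/
def IsCollineation {F : Type*} [Field F] [DecidableEq F] (r s : F)
    (φ : (F × F) × (F × F) → (F × F) × (F × F)) : Prop :=
  Function.Bijective φ ∧ ∀ ℓ, IsHallLine r s ℓ → IsHallLine r s (φ '' ℓ)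

/-- The translation `τ_{a,b} : (x,y) ↦ (x + a, y + b)`. -/
def tauMap {F : Type*} [Field F] (a b : F × F) :
    (F × F) × (F × F) → (F × F) × (F × F) :=
  fun P => (P.1 + a, P.2 + b)

/-- The set `TR` of all translations of the Hall affine plane. -/
def TRset (F : Type*) [Field F] :
    Set ((F × F) × (F × F) → (F × F) × (F × F)) :=
  {f | ∃ a b : F × F, f = tauMap a b}

/-- Two lines are parallel when they are equal or disjoint. -/
def HParallel {F : Type*} (ℓ ℓ' : Set ((F × F) × (F × F))) : Prop :=
  ℓ = ℓ' ∨ ℓ ∩ ℓ' = ∅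

section hallAux

set_option linter.unusedSectionVars false

variable {F : Type*} [Field F] [DecidableEq F] (r s : F)

lemma hallMul_add_left (x y m : F × F) :
    hallMul r s (x + y) m = hallMul r s x m + hallMul r s y m := by
  unfold hallMul
  split_ifs <;> simp [Prod.ext_iff] <;> constructor <;> ring

lemma hallMul_sub_left (x y m : F × F) :
    hallMul r s (x - y) m = hallMul r s x m - hallMul r s y m := by
  unfold hallMul
  split_ifs <;> simp [Prod.ext_iff] <;> constructor <;> ring

lemma hallMul_zero_left (m : F × F) : hallMul r s 0 m = 0 := by
  unfold hallMul
  split_ifs <;> simp [Prod.ext_iff]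

lemma no_root {r s : F} (hirr : Irreducible (X ^ 2 - C r * X - C s : F[X])) (c : F) :
    c ^ 2 - r * c - s ≠ 0 := by
  intro h
  have hroot : IsRoot (X ^ 2 - C r * X - C s : F[X]) c := by
    simp [IsRoot, h]
  obtain ⟨g, hg⟩ := dvd_iff_isRoot.mpr hroot
  rcases hirr.isUnit_or_isUnit hg with hu | hu
  · exact (Polynomial.not_isUnit_X_sub_C c) hu
  · have hdeg : (X ^ 2 - C r * X - C s : F[X]).natDegree = 2 := by
      compute_degree!
    have hg0 : g ≠ 0 := by
      rintro rfl
      simp at hg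
      rw [hg] at hdeg
      simp at hdeg
    have : ((X - C c) * g).natDegree = 1 + g.natDegree := by
      rw [natDegree_mul (X_sub_C_ne_zero c) hg0, natDegree_X_sub_C]
    rw [← hg, hdeg] at this
    have := Polynomial.natDegree_eq_zero_of_isUnit hu
    omega

end hallAux

private lemma hall_cancel {F : Type*} [Field F] [DecidableEq F] {r s : F}
    (hnr : ∀ c : F, c ^ 2 - r * c - s ≠ 0)
    {x m m' : F × F} (hx : x ≠ 0)
    (h : hallMul r s x m = hallMul r s x m') : m = m' := by
  obtain ⟨x1, x2⟩ := x
  obtain ⟨m1, m2⟩ := m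
  obtain ⟨n1, n2⟩ := m'
  have hx' : x1 ≠ 0 ∨ x2 ≠ 0 := by
    by_contra hc; push_neg at hc; exact hx (by simp [Prod.ext_iff, hc.1, hc.2])
  simp only [hallMul] at h
  split_ifs at h with h1 h2 h2 <;>
    simp only [Prod.mk.injEq] at h ⊢ <;> obtain ⟨E1, E2⟩ := h
  · -- m2 = 0, n2 = 0
    rcases hx' with hx1 | hx2
    · exact ⟨mul_left_cancel₀ hx1 E1, h1.trans h2.symm⟩
    · exact ⟨mul_left_cancel₀ hx2 E2, h1.trans h2.symm⟩
  · -- m2 = 0, n2 ≠ 0 : contradiction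
    exfalso
    have hx2 : x2 ≠ 0 := by
      rintro rfl
      simp at E2
      rcases E2 with h0 | h0
      · rcases hx' with hx1 | hx2 <;> simp_all
      · exact h2 h0
    have E1c : x1 * m1 * n2 = x1 * n1 * n2 - x2 * (n1 ^ 2 - r * n1 - s) := by
      field_simp at E1
      linear_combination E1
    have key : x2 * (m1 ^ 2 - r * m1 - s) = 0 := by
      linear_combination E1c + (m1 - n1) * E2
    exact hnr m1 ((mul_eq_zero.mp key).resolve_left hx2)
  · -- m2 ≠ 0, n2 = 0 : contradiction
    exfalso
    have hx2 : x2 ≠ 0 := by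
      rintro rfl
      simp at E2
      rcases E2 with h0 | h0
      · rcases hx' with hx1 | hx2 <;> simp_all
      · exact h1 h0
    have E1c : x1 * m1 * m2 - x2 * (m1 ^ 2 - r * m1 - s) = x1 * n1 * m2 := by
      field_simp at E1
      linear_combination E1
    have key : x2 * (n1 ^ 2 - r * n1 - s) = 0 := by
      linear_combination (m1 - n1) * E2 - E1c
    exact hnr n1 ((mul_eq_zero.mp key).resolve_left hx2)
  · -- m2 ≠ 0, n2 ≠ 0
    by_cases hmn : m2 = n2
    · subst hmn
      constructor
      · rcases eq_or_ne x2 0 with rfl | hx2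
        · have hx1 : x1 ≠ 0 := by rcases hx' with h0 | h0 <;> simp_all
          have : x1 * m1 = x1 * n1 := by linear_combination E1
          exact mul_left_cancel₀ hx1 this
        · have : x2 * m1 = x2 * n1 := by linear_combination -E2
          exact mul_left_cancel₀ hx2 this
      · rfl
    · exfalso
      have hB : m2 - n2 ≠ 0 := sub_ne_zero.mpr hmn
      have hx2 : x2 ≠ 0 := by
        rintro rfl
        have : x1 * (m2 - n2) = 0 := by linear_combination E2
        rcases mul_eq_zero.mp this with h0 | h0
        · rcases hx' with hh | hh <;> simp_all
        · exact hB h0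
      have E1c : x1 * m1 * m2 * n2 - x2 * n2 * (m1 ^ 2 - r * m1 - s) =
          x1 * n1 * m2 * n2 - x2 * m2 * (n1 ^ 2 - r * n1 - s) := by
        field_simp at E1
        linear_combination E1
      have key : x2 * ((n1 * (m2 - n2) - n2 * (m1 - n1)) ^ 2
          - r * (n1 * (m2 - n2) - n2 * (m1 - n1)) * (m2 - n2) - s * (m2 - n2) ^ 2) = 0 := by
        linear_combination (m2 - n2) * E1c - m2 * n2 * (m1 - n1) * E2
      have hT : (n1 * (m2 - n2) - n2 * (m1 - n1)) ^ 2
          - r * (n1 * (m2 - n2) - n2 * (m1 - n1)) * (m2 - n2) - s * (m2 - n2) ^ 2 = 0 :=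
        (mul_eq_zero.mp key).resolve_left hx2
      set w := (n1 * (m2 - n2) - n2 * (m1 - n1)) / (m2 - n2) with hw
      have hwB : w * (m2 - n2) = n1 * (m2 - n2) - n2 * (m1 - n1) := by
        rw [hw]; field_simp
      have hq : (w ^ 2 - r * w - s) * (m2 - n2) ^ 2 = 0 := by
        linear_combination (w * (m2 - n2) + (n1 * (m2 - n2) - n2 * (m1 - n1))
          - r * (m2 - n2)) * hwB + hT
      exact hnr w ((mul_eq_zero.mp hq).resolve_right (pow_ne_zero 2 hB))

section hallAux
set_option linter.unusedSectionVars false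
variable {F : Type*} [Field F] [DecidableEq F] (r s : F)


lemma hall_exists_inter {F : Type*} [Field F] [Fintype F] [DecidableEq F] {r s : F}
    (hnr : ∀ c : F, c ^ 2 - r * c - s ≠ 0)
    {m m' : F × F} (hm : m ≠ m') (k k' : F × F) :
    ∃ x, hallMul r s x m + k = hallMul r s x m' + k' := by
  set L : F × F → F × F := fun x => hallMul r s x m - hallMul r s x m' with hL
  have hinj : Function.Injective L := by
    intro x y hxy
    by_contra hne
    apply hm
    apply hall_cancel hnr (sub_ne_zero.mpr hne)
    rw [hallMul_sub_left, hallMul_sub_left]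
    simp only [hL] at hxy
    rw [sub_eq_sub_iff_sub_eq_sub]
    exact hxy
  have hsurj : Function.Surjective L := Finite.surjective_of_injective hinj
  obtain ⟨x, hx⟩ := hsurj (k' - k)
  refine ⟨x, ?_⟩
  simp only [hL] at hx
  have hx' : hallMul r s x m - hallMul r s x m' = k' - k := hx
  linear_combination hx'

lemma image_vertLine {a b c : F × F} :
    tauMap a b '' vertLine c = vertLine (c + a) := by
  ext P
  constructor
  · rintro ⟨Q, hQ, rfl⟩
    simp only [vertLine, Set.mem_setOf_eq] at hQ ⊢
    simp [tauMap, hQ]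
  · intro hP
    refine ⟨(P.1 - a, P.2 - b), ?_, ?_⟩
    · simp only [vertLine, Set.mem_setOf_eq] at hP ⊢
      rw [hP]; abel
    · simp [tauMap, Prod.ext_iff]

lemma image_slopeLine {a b m k : F × F} :
    tauMap a b '' slopeLine r s m k = slopeLine r s m (k + b - hallMul r s a m) := by
  ext P
  constructor
  · rintro ⟨Q, hQ, rfl⟩
    simp only [slopeLine, Set.mem_setOf_eq] at hQ ⊢
    simp only [tauMap]
    rw [hallMul_add_left, hQ]
    abel
  · intro hP
    refine ⟨(P.1 - a, P.2 - b), ?_, ?_⟩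
    · simp only [slopeLine, Set.mem_setOf_eq] at hP ⊢
      rw [hallMul_sub_left, hP]
      abel
    · simp [tauMap, Prod.ext_iff]

lemma slope_parallel (m k k' : F × F) :
    HParallel (slopeLine r s m k) (slopeLine r s m k') := by
  by_cases hk : k = k'
  · left; rw [hk]
  · right
    rw [Set.eq_empty_iff_forall_notMem]
    rintro P ⟨hP1, hP2⟩
    simp only [slopeLine, Set.mem_setOf_eq] at hP1 hP2
    exact hk (add_left_cancel ((hP1.symm.trans hP2)))

lemma vert_parallel (c c' : F × F) : HParallel (vertLine c : Set ((F × F) × (F × F))) (vertLine c') := by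
  by_cases hc : c = c'
  · left; rw [hc]
  · right
    rw [Set.eq_empty_iff_forall_notMem]
    rintro P ⟨hP1, hP2⟩
    exact hc (hP1.symm.trans hP2)

lemma vert_ne_slope (c m k : F × F) :
    (vertLine c : Set ((F × F) × (F × F))) ≠ slopeLine r s m k := by
  intro h
  have h1 : ((c, hallMul r s c m + k + ((1 : F), (0 : F))) : (F × F) × (F × F)) ∈ vertLine c := rfl
  rw [h] at h1
  simp only [slopeLine, Set.mem_setOf_eq] at h1
  have h2 : ((1 : F), (0 : F)) = (0 : F × F) := by
    have h3 : hallMul r s c m + k + ((1:F), (0:F)) = (hallMul r s c m + k) + 0 := by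
      rw [add_zero]; exact h1
    exact add_left_cancel h3
  simp [Prod.ext_iff] at h2

end hallAux

/-- `TR` is a group under composition isomorphic to the additive group of `H × H`
(the map `(a,b) ↦ τ_{a,b}` is an injective homomorphism from the additive group onto `TR`);
`TR` is sharply transitive on points; every translation maps each line to a parallel line;
and any two parallel lines are related by a translation. -/
theorem TR_translation_group {F : Type*} [Field F] [Fintype F] [DecidableEq F]
    (q : ℕ) (hq : Fintype.card F = q) (r s : F)
    (hirr : Irreducible (X ^ 2 - C r * X - C s : F[X])) :
    (tauMap (0 : F × F) 0 = id) ∧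
    (Function.Injective fun v : (F × F) × (F × F) => tauMap v.1 v.2) ∧
    (∀ a b a' b' : F × F, tauMap (a + a') (b + b') = tauMap a b ∘ tauMap a' b') ∧
    (∀ P Q : (F × F) × (F × F), ∃! f, f ∈ TRset F ∧ f P = Q) ∧
    (∀ f ∈ TRset F, ∀ ℓ, IsHallLine r s ℓ →
      IsHallLine r s (f '' ℓ) ∧ HParallel ℓ (f '' ℓ)) ∧
    (∀ ℓ ℓ', IsHallLine r s ℓ → IsHallLine r s ℓ' → HParallel ℓ ℓ' →
      ∃ f ∈ TRset F, f '' ℓ = ℓ') := by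
  have hnr : ∀ c : F, c ^ 2 - r * c - s ≠ 0 := no_root hirr
  have htau0 : tauMap (0 : F × F) 0 = id := by
    funext P; simp [tauMap]
  refine ⟨htau0, ?_, ?_, ?_, ?_, ?_⟩
  · intro v w h
    have h0 := congrFun h ((0, 0) : (F × F) × (F × F))
    simp only [tauMap, Prod.mk.injEq, zero_add] at h0
    exact Prod.ext_iff.mpr h0
  · intro a b a' b'
    funext P
    simp only [tauMap, Function.comp_apply, Prod.mk.injEq]
    constructor <;> abel
  · intro P Q
    refine ⟨tauMap (Q.1 - P.1) (Q.2 - P.2), ⟨⟨_, _, rfl⟩, ?_⟩, ?_⟩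
    · have h1 : P.1 + (Q.1 - P.1) = Q.1 := by abel
      have h2 : P.2 + (Q.2 - P.2) = Q.2 := by abel
      exact Prod.ext_iff.mpr ⟨h1, h2⟩
    · rintro f ⟨⟨a, b, rfl⟩, hf⟩
      obtain ⟨ha, hb⟩ := Prod.ext_iff.mp hf
      simp only [tauMap] at ha hb
      have ha' : a = Q.1 - P.1 := by rw [← ha]; abel
      have hb' : b = Q.2 - P.2 := by rw [← hb]; abel
      rw [ha', hb']
  · rintro f ⟨a, b, rfl⟩ ℓ hℓ
    rcases hℓ with ⟨c, rfl⟩ | ⟨m, k, rfl⟩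
    · rw [image_vertLine]
      exact ⟨Or.inl ⟨c + a, rfl⟩, vert_parallel c (c + a)⟩
    · rw [image_slopeLine]
      exact ⟨Or.inr ⟨m, _, rfl⟩, slope_parallel r s m k _⟩
  · rintro ℓ ℓ' hℓ hℓ' hpar
    rcases hℓ with ⟨c, rfl⟩ | ⟨m, k, rfl⟩ <;> rcases hℓ' with ⟨c', rfl⟩ | ⟨m', k', rfl⟩
    · refine ⟨tauMap (c' - c) 0, ⟨_, _, rfl⟩, ?_⟩
      have hcc : c + (c' - c) = c' := by abel
      rw [image_vertLine, hcc]
    · exfalso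
      rcases hpar with heq | hdis
      · exact vert_ne_slope r s c m' k' heq
      · have h1 : ((c, hallMul r s c m' + k') : (F × F) × (F × F)) ∈
            vertLine c ∩ slopeLine r s m' k' := ⟨rfl, rfl⟩
        rw [hdis] at h1
        exact h1
    · exfalso
      rcases hpar with heq | hdis
      · exact vert_ne_slope r s c' m k heq.symm
      · have h1 : ((c', hallMul r s c' m + k) : (F × F) × (F × F)) ∈
            slopeLine r s m k ∩ vertLine c' := ⟨rfl, rfl⟩
        rw [hdis] at h1
        exact h1
    · rcases hpar with heq | hdis
      · refine ⟨tauMap 0 0, ⟨_, _, rfl⟩, ?_⟩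
        rw [htau0, Set.image_id, heq]
      · by_cases hmm : m = m'
        · subst hmm
          refine ⟨tauMap 0 (k' - k), ⟨_, _, rfl⟩, ?_⟩
          have hkk : k + (k' - k) - hallMul r s 0 m = k' := by
            rw [hallMul_zero_left]; abel
          rw [image_slopeLine, hkk]
        · exfalso
          obtain ⟨x, hx⟩ := hall_exists_inter hnr hmm k k'
          have h1 : ((x, hallMul r s x m + k) : (F × F) × (F × F)) ∈
              slopeLine r s m k ∩ slopeLine r s m' k' := ⟨rfl, hx⟩
          rw [hdis] at h1
          exact h1
end

section
/- The set ATP of all autotopisms σ_S of the Hall affine plane A_H is a group under composition isomorphic to GL(2, F); every autotopism maps each type 1 line to a parallel type 1 line (so ATP fixes each parallel class of type 1 lines); for any two elements m, m' ∈ H with m₂ ≠ 0 and m'₂ ≠ 0 there is an autotopism mapping the parallel class of lines of slope m onto the parallel class of lines of slope m' (so ATP acts transitively on the parallel classes of type 2 lines); and ATP has exactly two orbits on the set of vertical lines, namely the singleton {[(0,0)]} and the set of all vertical lines [c] with c ≠ (0,0). -/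
open Polynomial

/-- Right action of a `2 × 2` matrix on a row vector `x = (x₁, x₂)`. -/
def rmul {F : Type*} [Field F] (S : Matrix (Fin 2) (Fin 2) F) (x : F × F) : F × F :=
  (x.1 * S 0 0 + x.2 * S 1 0, x.1 * S 0 1 + x.2 * S 1 1)

/-- The autotopism `σ_S : (x,y) ↦ (xS, yS)`. -/
def sigmaMap {F : Type*} [Field F] (S : Matrix (Fin 2) (Fin 2) F) :
    (F × F) × (F × F) → (F × F) × (F × F) :=
  fun P => (rmul S P.1, rmul S P.2)

/-- The set `ATP` of all autotopisms `σ_S`, `S ∈ GL(2,F)`. -/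
def ATPset (F : Type*) [Field F] :
    Set ((F × F) × (F × F) → (F × F) × (F × F)) :=
  {f | ∃ S : GL (Fin 2) F, f = sigmaMap (S : Matrix (Fin 2) (Fin 2) F)}

/-! Right multiplication by `m` in the Hall system is the linear map `x ↦ x·M_m` of a
`2 × 2` matrix `M_m` (`slopeMatrix r s m`), and `σ_S` maps `[m, k]` onto `[m', kS]` as soon as `M_m S = S M_m'`.
For `m₂ = 0` the matrix `M_m` is scalar, so every `S` commutes with it. For `m₂ ≠ 0` the
matrix `M_m` has trace `r` and determinant `-s`, and `(1,0)` is a cyclic vector for it, so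
all these matrices are conjugate to the companion matrix of `x² - r x - s`; the conjugating
matrices give the autotopisms between the type 2 parallel classes. Vertical lines `[c]` are
mapped to `[cS]`, and `GL(2, F)` is transitive on nonzero vectors. -/

section HallPlane

variable {F : Type*} [Field F]

lemma rmul_one (x : F × F) : rmul (1 : Matrix (Fin 2) (Fin 2) F) x = x := by
  simp [rmul]

lemma rmul_mul (S T : Matrix (Fin 2) (Fin 2) F) (x : F × F) :
    rmul (S * T) x = rmul T (rmul S x) := by
  simp only [rmul, Matrix.mul_apply, Fin.sum_univ_two, Prod.mk.injEq]
  constructor <;> ring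

lemma rmul_add (S : Matrix (Fin 2) (Fin 2) F) (a b : F × F) :
    rmul S (a + b) = rmul S a + rmul S b := by
  simp only [rmul, Prod.fst_add, Prod.snd_add, Prod.mk_add_mk, Prod.mk.injEq]
  constructor <;> ring

lemma rmul_zero (S : Matrix (Fin 2) (Fin 2) F) : rmul S (0 : F × F) = 0 := by
  simp [rmul]

lemma rmul_injective : Function.Injective (rmul : Matrix (Fin 2) (Fin 2) F → F × F → F × F) := by
  intro S T h
  have h₁ := congrFun h (1, 0)
  have h₂ := congrFun h (0, 1)
  simp only [rmul, Prod.mk.injEq, one_mul, zero_mul, add_zero, zero_add] at h₁ h₂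
  ext i j
  fin_cases i <;> fin_cases j
  exacts [h₁.1, h₁.2, h₂.1, h₂.2]

lemma rmul_inv_eq_iff (S : GL (Fin 2) F) (x y : F × F) :
    rmul ((S⁻¹ : GL (Fin 2) F) : Matrix (Fin 2) (Fin 2) F) x = y ↔
      x = rmul (S : Matrix (Fin 2) (Fin 2) F) y := by
  constructor <;> rintro rfl
  · rw [← rmul_mul, ← Units.val_mul, inv_mul_cancel, Units.val_one, rmul_one]
  · rw [← rmul_mul, ← Units.val_mul, mul_inv_cancel, Units.val_one, rmul_one]

lemma exists_rmul_one_zero_eq {c : F × F} (hc : c ≠ 0) :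
    ∃ S : GL (Fin 2) F, rmul (S : Matrix (Fin 2) (Fin 2) F) (1, 0) = c := by
  by_cases h₁ : c.1 = 0
  · have h₂ : c.2 ≠ 0 := fun h₂ => hc (Prod.ext h₁ h₂)
    refine ⟨.mkOfDetNeZero !![c.1, c.2; 1, 0] (by simp [Matrix.det_fin_two, h₂]), ?_⟩
    simp [rmul]
  · refine ⟨.mkOfDetNeZero !![c.1, c.2; 0, 1] (by simp [Matrix.det_fin_two, h₁]), ?_⟩
    simp [rmul]

lemma exists_rmul_eq {c c' : F × F} (hc : c ≠ 0) (hc' : c' ≠ 0) :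
    ∃ S : GL (Fin 2) F, rmul (S : Matrix (Fin 2) (Fin 2) F) c = c' := by
  obtain ⟨U, hU⟩ := exists_rmul_one_zero_eq hc
  obtain ⟨V, hV⟩ := exists_rmul_one_zero_eq hc'
  refine ⟨U⁻¹ * V, ?_⟩
  rw [Units.val_mul, rmul_mul, (rmul_inv_eq_iff U c _).mpr hU.symm, hV]

lemma sigmaMap_one : sigmaMap (1 : Matrix (Fin 2) (Fin 2) F) = id := by
  funext P
  simp [sigmaMap, rmul_one]

lemma sigmaMap_mul (S T : Matrix (Fin 2) (Fin 2) F) :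
    sigmaMap (S * T) = sigmaMap T ∘ sigmaMap S := by
  funext P
  simp [sigmaMap, rmul_mul]

lemma sigmaMap_injective :
    Function.Injective (sigmaMap : Matrix (Fin 2) (Fin 2) F → _) := fun _ _ h =>
  rmul_injective <| funext fun x => congrArg Prod.fst (congrFun h (x, x))

lemma sigmaMap_image_eq_preimage (S : GL (Fin 2) F) (L : Set ((F × F) × (F × F))) :
    sigmaMap (S : Matrix (Fin 2) (Fin 2) F) '' L =
      sigmaMap ((S⁻¹ : GL (Fin 2) F) : Matrix (Fin 2) (Fin 2) F) ⁻¹' L := by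
  refine congrFun (Set.image_eq_preimage_of_inverse (fun P => ?_) (fun P => ?_)) L <;>
    rw [← Function.comp_apply (f := sigmaMap _), ← sigmaMap_mul, ← Units.val_mul]
  · rw [mul_inv_cancel, Units.val_one, sigmaMap_one, id]
  · rw [inv_mul_cancel, Units.val_one, sigmaMap_one, id]

lemma sigmaMap_image_vertLine (S : GL (Fin 2) F) (c : F × F) :
    sigmaMap (S : Matrix (Fin 2) (Fin 2) F) '' vertLine c =
      vertLine (rmul (S : Matrix (Fin 2) (Fin 2) F) c) := by
  ext P
  simp only [sigmaMap_image_eq_preimage, vertLine, Set.mem_preimage, Set.mem_ofPred_eq, sigmaMap,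
    rmul_inv_eq_iff]

variable [DecidableEq F]

def slopeMatrix (r s : F) (m : F × F) : Matrix (Fin 2) (Fin 2) F :=
  if m.2 = 0 then m.1 • 1
  else !![m.1, m.2; -(m.2⁻¹ * (m.1 ^ 2 - r * m.1 - s)), r - m.1]

lemma hallMul_eq_rmul_slopeMatrix (r s : F) (x m : F × F) :
    hallMul r s x m = rmul (slopeMatrix r s m) x := by
  by_cases hm : m.2 = 0
  · simp [hallMul, slopeMatrix, hm, rmul]
  · simp only [hallMul, slopeMatrix, if_neg hm, rmul, Prod.mk.injEq]
    constructor <;> simp <;> ring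

lemma sigmaMap_image_slopeLine (r s : F) (S : GL (Fin 2) F) {m m' : F × F}
    (h : SemiconjBy (S : Matrix (Fin 2) (Fin 2) F) (slopeMatrix r s m') (slopeMatrix r s m))
    (k : F × F) :
    sigmaMap (S : Matrix (Fin 2) (Fin 2) F) '' slopeLine r s m k =
      slopeLine r s m' (rmul (S : Matrix (Fin 2) (Fin 2) F) k) := by
  have hconj : ∀ x, rmul (S : Matrix (Fin 2) (Fin 2) F)
      (rmul (slopeMatrix r s m) (rmul ((S⁻¹ : GL (Fin 2) F) : Matrix (Fin 2) (Fin 2) F) x)) =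
        rmul (slopeMatrix r s m') x := by
    intro x
    rw [← rmul_mul, ← rmul_mul, ← h.eq, ← Matrix.mul_assoc, ← Units.val_mul,
      inv_mul_cancel, Units.val_one, Matrix.one_mul]
  ext P
  simp only [sigmaMap_image_eq_preimage, slopeLine, Set.mem_preimage, Set.mem_ofPred_eq, sigmaMap,
    hallMul_eq_rmul_slopeMatrix, rmul_inv_eq_iff, rmul_add, hconj]

lemma commute_slopeMatrix_of_snd_eq_zero (r s : F) {m : F × F} (hm : m.2 = 0)
    (S : Matrix (Fin 2) (Fin 2) F) : Commute S (slopeMatrix r s m) := by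
  rw [slopeMatrix, if_pos hm]
  exact (Commute.one_right S).smul_right m.1

lemma semiconjBy_slopeMatrix_companion (r s : F) {m : F × F} (hm : m.2 ≠ 0) :
    SemiconjBy !![1, 0; m.1, m.2] (slopeMatrix r s m) !![0, 1; s, r] := by
  rw [SemiconjBy, slopeMatrix, if_neg hm]
  ext i j
  fin_cases i <;> fin_cases j <;> simp [Matrix.mul_apply] <;> field_simp <;> ring

lemma exists_semiconjBy_slopeMatrix (r s : F) {m m' : F × F} (hm : m.2 ≠ 0) (hm' : m'.2 ≠ 0) :
    ∃ S : GL (Fin 2) F,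
      SemiconjBy (S : Matrix (Fin 2) (Fin 2) F) (slopeMatrix r s m') (slopeMatrix r s m) := by
  let P : GL (Fin 2) F := .mkOfDetNeZero !![1, 0; m.1, m.2] (by simpa [Matrix.det_fin_two])
  let P' : GL (Fin 2) F := .mkOfDetNeZero !![1, 0; m'.1, m'.2] (by simpa [Matrix.det_fin_two])
  refine ⟨P⁻¹ * P', ?_⟩
  rw [Units.val_mul]
  exact (semiconjBy_slopeMatrix_companion r s hm).units_inv_symm_left.mul_left
    (semiconjBy_slopeMatrix_companion r s hm')

end HallPlane

theorem ATP_autotopism_group_general {F : Type*} [Field F] [DecidableEq F]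
    (r s : F) :
    (sigmaMap ((1 : GL (Fin 2) F) : Matrix (Fin 2) (Fin 2) F) = id) ∧
    (Function.Injective fun S : GL (Fin 2) F => sigmaMap (S : Matrix (Fin 2) (Fin 2) F)) ∧
    (∀ S T : GL (Fin 2) F,
      sigmaMap ((S * T : GL (Fin 2) F) : Matrix (Fin 2) (Fin 2) F) =
        sigmaMap (T : Matrix (Fin 2) (Fin 2) F) ∘ sigmaMap (S : Matrix (Fin 2) (Fin 2) F)) ∧
    (∀ f ∈ ATPset F, ∀ m k : F × F, m.2 = 0 →
      ∃ k' : F × F, f '' slopeLine r s m k = slopeLine r s m k') ∧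
    (∀ m m' : F × F, m.2 ≠ 0 → m'.2 ≠ 0 →
      ∃ f ∈ ATPset F, ∀ k : F × F, ∃ k' : F × F,
        f '' slopeLine r s m k = slopeLine r s m' k') ∧
    (∀ f ∈ ATPset F, f '' vertLine (0 : F × F) = vertLine 0) ∧
    (∀ c c' : F × F, c ≠ 0 → c' ≠ 0 → ∃ f ∈ ATPset F, f '' vertLine c = vertLine c') := by
  refine ⟨sigmaMap_one, sigmaMap_injective.comp Units.val_injective,
    fun S T => sigmaMap_mul _ _, ?_, ?_, ?_, ?_⟩
  · rintro f ⟨S, rfl⟩ m k hm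
    exact ⟨_, sigmaMap_image_slopeLine r s S (commute_slopeMatrix_of_snd_eq_zero r s hm _) k⟩
  · intro m m' hm hm'
    obtain ⟨S, hS⟩ := exists_semiconjBy_slopeMatrix r s hm hm'
    exact ⟨_, ⟨S, rfl⟩, fun k => ⟨_, sigmaMap_image_slopeLine r s S hS k⟩⟩
  · rintro f ⟨S, rfl⟩
    rw [sigmaMap_image_vertLine, rmul_zero]
  · intro c c' hc hc'
    obtain ⟨S, hS⟩ := exists_rmul_eq hc hc'
    exact ⟨_, ⟨S, rfl⟩, by rw [sigmaMap_image_vertLine, hS]⟩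

/-- `ATP` is a group under composition isomorphic to `GL(2,F)` (the map `S ↦ σ_S` is an
injective anti-homomorphism, hence gives an isomorphism onto `ATP`); each autotopism maps
each type 1 line to a parallel type 1 line of the same slope; `ATP` acts transitively on the
parallel classes of type 2 lines; and `ATP` has exactly two orbits on vertical lines,
`{[(0,0)]}` and the rest. -/
theorem ATP_autotopism_group {F : Type*} [Field F] [Fintype F] [DecidableEq F]
    (q : ℕ) (hq : Fintype.card F = q) (r s : F)
    (hirr : Irreducible (X ^ 2 - C r * X - C s : F[X])) :
    (sigmaMap ((1 : GL (Fin 2) F) : Matrix (Fin 2) (Fin 2) F) = id) ∧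
    (Function.Injective fun S : GL (Fin 2) F => sigmaMap (S : Matrix (Fin 2) (Fin 2) F)) ∧
    (∀ S T : GL (Fin 2) F,
      sigmaMap ((S * T : GL (Fin 2) F) : Matrix (Fin 2) (Fin 2) F) =
        sigmaMap (T : Matrix (Fin 2) (Fin 2) F) ∘ sigmaMap (S : Matrix (Fin 2) (Fin 2) F)) ∧
    (∀ f ∈ ATPset F, ∀ m k : F × F, m.2 = 0 →
      ∃ k' : F × F, f '' slopeLine r s m k = slopeLine r s m k') ∧
    (∀ m m' : F × F, m.2 ≠ 0 → m'.2 ≠ 0 →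
      ∃ f ∈ ATPset F, ∀ k : F × F, ∃ k' : F × F,
        f '' slopeLine r s m k = slopeLine r s m' k') ∧
    (∀ f ∈ ATPset F, f '' vertLine (0 : F × F) = vertLine 0) ∧
    (∀ c c' : F × F, c ≠ 0 → c' ≠ 0 → ∃ f ∈ ATPset F, f '' vertLine c = vertLine c') :=
  ATP_autotopism_group_general r s
end

section
/- For every (a,b) ∈ F² with (a,b) ≠ (0,0), the linear map λ_{a,b} is a collineation of the Hall affine plane A_H, and it acts on lines as follows. On vertical lines: λ_{a,b}([c]) = [b·c] if a = 0, and λ_{a,b}([c]) = [(b/a, 0), −((b² − abr − a²s)/a)·c] if a ≠ 0. On type 1 lines with slope m = (m₁, 0): λ_{a,b}([m,k]) = [m, b·k] if a = 0; λ_{a,b}([m,k]) = [a·k] (a vertical line) if a ≠ 0 and m₁ = r − b/a; and λ_{a,b}([m,k]) = [((as + m₁b)/(am₁ − ar + b), 0), ((b² − abr − a²s)/(am₁ − ar + b))·k] if a ≠ 0 and m₁ ≠ r − b/a. On type 2 lines (m₂ ≠ 0): λ_{a,b}([m, k]) = [m, −a·(k·m) + b·k], where k·m is the Hall product and the remaining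 products are scalar multiples of elements of H by elements of F. -/
/-!
`λ_{a,b}` is `F`-linear with determinant `b² - abr - a²s`, which is the norm of `b - aθ` for a
root `θ` of `x² - rx - s`; irreducibility makes it nonzero for `(a, b) ≠ 0`, so `λ_{a,b}` is a
bijection with an explicit inverse. For a fixed slope `m`, `x ↦ x·m` is `F`-linear, so every line
is cut out by `F`-linear equations in the coordinates, and one checks by direct computation that
`λ` maps each line into the claimed image line and `λ⁻¹` maps that line back. A type 1 line of
slope `(m₁, 0)` goes to a vertical line exactly when `a m₁ - a r + b = 0`.
-/

open Polynomial

/-- The linear map `λ_{a,b} : (x,y) ↦ ((-ar+b)·x + a·y, as·x + b·y)`,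
where scalars act componentwise. -/
def lambdaMap {F : Type*} [Field F] (r s a b : F) :
    (F × F) × (F × F) → (F × F) × (F × F) :=
  fun P => ((-(a * r) + b) • P.1 + a • P.2, (a * s) • P.1 + b • P.2)

theorem lambda_det_ne_zero {F : Type*} [Field F] {r s : F}
    (hirr : Irreducible (X ^ 2 - C r * X - C s : F[X])) {a b : F} (hab : (a, b) ≠ (0, 0)) :
    b ^ 2 - a * b * r - a ^ 2 * s ≠ 0 := by
  rcases eq_or_ne a 0 with rfl | ha
  · have hb : b ≠ 0 := by simpa using hab
    simpa using hb
  · intro hD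
    have hdeg : (X ^ 2 - C r * X - C s : F[X]).natDegree ≠ 1 := by
      rw [show (X ^ 2 - C r * X - C s : F[X]).natDegree = 2 by compute_degree!]
      decide
    refine hirr.not_isRoot_of_natDegree_ne_one hdeg (x := b / a) ?_
    simp only [IsRoot, eval_sub, eval_pow, eval_X, eval_mul, eval_C]
    field_simp
    linear_combination hD

@[simp]
theorem mem_vertLine {F : Type*} {c : F × F} {P : (F × F) × (F × F)} :
    P ∈ vertLine c ↔ P.1 = c :=
  Iff.rfl

section Lambda

variable {F : Type*} [Field F] {r s a b : F}

@[simps]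
def lambdaEquiv (hD : b ^ 2 - a * b * r - a ^ 2 * s ≠ 0) :
    (F × F) × (F × F) ≃ (F × F) × (F × F) where
  toFun := lambdaMap r s a b
  invFun Q := ((b ^ 2 - a * b * r - a ^ 2 * s)⁻¹ • (b • Q.1 - a • Q.2),
    (b ^ 2 - a * b * r - a ^ 2 * s)⁻¹ • ((-(a * s)) • Q.1 + (-(a * r) + b) • Q.2))
  left_inv := by
    rintro ⟨⟨x₁, x₂⟩, ⟨y₁, y₂⟩⟩
    simp only [lambdaMap, Prod.smul_mk, Prod.mk_add_mk, Prod.mk_sub_mk, smul_eq_mul,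
      Prod.mk.injEq]
    -- as an atom, the determinant is cleared by `field_simp` using `hD`
    generalize hdet : b ^ 2 - a * b * r - a ^ 2 * s = D at hD ⊢
    refine ⟨⟨?_, ?_⟩, ?_, ?_⟩ <;> field_simp <;> subst hdet <;> ring
  right_inv := by
    rintro ⟨⟨x₁, x₂⟩, ⟨y₁, y₂⟩⟩
    simp only [lambdaMap, Prod.smul_mk, Prod.mk_add_mk, Prod.mk_sub_mk, smul_eq_mul,
      Prod.mk.injEq]
    generalize hdet : b ^ 2 - a * b * r - a ^ 2 * s = D at hD ⊢
    refine ⟨⟨?_, ?_⟩, ?_, ?_⟩ <;> field_simp <;> subst hdet <;> ring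

theorem image_vertLine_of_eq_zero (hb : b ≠ 0) (c : F × F) :
    lambdaMap r s 0 b '' vertLine c = vertLine (b • c) := by
  have hD : b ^ 2 - 0 * b * r - 0 ^ 2 * s ≠ 0 := by simpa using hb
  refine ((lambdaEquiv hD).bijOn' ?_ ?_).image_eq
  · rintro ⟨x, y⟩ rfl
    simp [lambdaMap]
  · rintro ⟨x, y⟩ rfl
    ext <;> simp <;> field_simp

theorem eq_sub_div_iff_mul_sub_mul_add_eq_zero (ha : a ≠ 0) {m₁ : F} :
    m₁ = r - b / a ↔ a * m₁ - a * r + b = 0 := by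
  constructor
  · rintro rfl
    field_simp
    ring
  · intro h
    field_simp
    linear_combination h

variable [DecidableEq F]

@[simp]
theorem mem_slopeLine {m k : F × F} {P : (F × F) × (F × F)} :
    P ∈ slopeLine r s m k ↔ P.2 = hallMul r s P.1 m + k :=
  Iff.rfl

@[simp]
theorem hallMul_mk_zero_s7 (x : F × F) (m₁ : F) : hallMul r s x (m₁, 0) = (x.1 * m₁, x.2 * m₁) :=
  if_pos rfl

theorem hallMul_of_snd_ne_zero_s7 (x : F × F) {m : F × F} (hm : m.2 ≠ 0) :
    hallMul r s x m = (x.1 * m.1 - x.2 * m.2⁻¹ * (m.1 ^ 2 - r * m.1 - s),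
      x.1 * m.2 - x.2 * m.1 + x.2 * r) :=
  if_neg hm

theorem image_vertLine_of_ne_zero (hD : b ^ 2 - a * b * r - a ^ 2 * s ≠ 0) (ha : a ≠ 0)
    (c : F × F) :
    lambdaMap r s a b '' vertLine c =
      slopeLine r s (b / a, 0) ((-((b ^ 2 - a * b * r - a ^ 2 * s) / a)) • c) := by
  refine ((lambdaEquiv hD).bijOn' ?_ ?_).image_eq
  · rintro ⟨⟨x₁, x₂⟩, ⟨y₁, y₂⟩⟩ rfl
    simp only [mem_slopeLine, lambdaEquiv_apply, lambdaMap, hallMul_mk_zero_s7, Prod.smul_mk,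
      Prod.mk_add_mk, smul_eq_mul, Prod.mk.injEq]
    constructor <;> field_simp <;> ring
  · obtain ⟨c₁, c₂⟩ := c
    rintro ⟨⟨x₁, x₂⟩, ⟨y₁, y₂⟩⟩ hQ
    simp only [mem_slopeLine, hallMul_mk_zero_s7, Prod.smul_mk, Prod.mk_add_mk, smul_eq_mul,
      Prod.mk.injEq] at hQ
    obtain ⟨rfl, rfl⟩ := hQ
    simp only [mem_vertLine, lambdaEquiv_symm_apply, Prod.smul_mk, Prod.mk_sub_mk, smul_eq_mul,
      Prod.mk.injEq]
    generalize hdet : b ^ 2 - a * b * r - a ^ 2 * s = D at hD ⊢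
    constructor <;> field_simp <;> subst hdet <;> ring

theorem image_slopeLine_mk_zero (hD : b ^ 2 - a * b * r - a ^ 2 * s ≠ 0) {m₁ : F}
    (he : a * m₁ - a * r + b ≠ 0) (k : F × F) :
    lambdaMap r s a b '' slopeLine r s (m₁, 0) k =
      slopeLine r s ((a * s + m₁ * b) / (a * m₁ - a * r + b), 0)
        (((b ^ 2 - a * b * r - a ^ 2 * s) / (a * m₁ - a * r + b)) • k) := by
  obtain ⟨k₁, k₂⟩ := k
  generalize he' : a * m₁ - a * r + b = e at he ⊢
  refine ((lambdaEquiv hD).bijOn' ?_ ?_).image_eq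
  · rintro ⟨⟨x₁, x₂⟩, ⟨y₁, y₂⟩⟩ hP
    simp only [mem_slopeLine, hallMul_mk_zero_s7, Prod.mk_add_mk, Prod.mk.injEq] at hP
    obtain ⟨rfl, rfl⟩ := hP
    simp only [mem_slopeLine, lambdaEquiv_apply, lambdaMap, hallMul_mk_zero_s7, Prod.smul_mk,
      Prod.mk_add_mk, smul_eq_mul, Prod.mk.injEq]
    constructor <;> field_simp <;> subst he' <;> ring
  · rintro ⟨⟨x₁, x₂⟩, ⟨y₁, y₂⟩⟩ hQ
    simp only [mem_slopeLine, hallMul_mk_zero_s7, Prod.smul_mk, Prod.mk_add_mk, smul_eq_mul,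
      Prod.mk.injEq] at hQ
    obtain ⟨rfl, rfl⟩ := hQ
    simp only [mem_slopeLine, lambdaEquiv_symm_apply, hallMul_mk_zero_s7, Prod.smul_mk,
      Prod.mk_add_mk, Prod.mk_sub_mk, smul_eq_mul, Prod.mk.injEq]
    generalize hdet : b ^ 2 - a * b * r - a ^ 2 * s = D at hD ⊢
    constructor <;> field_simp <;> subst hdet he' <;> ring

theorem image_slopeLine_mk_zero_of_eq_zero (hb : b ≠ 0) (m₁ : F) (k : F × F) :
    lambdaMap r s 0 b '' slopeLine r s (m₁, 0) k = slopeLine r s (m₁, 0) (b • k) := by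
  have hD : b ^ 2 - 0 * b * r - 0 ^ 2 * s ≠ 0 := by simpa using hb
  simpa [hb, pow_two] using image_slopeLine_mk_zero hD (m₁ := m₁) (by simpa using hb) k

theorem image_slopeLine_mk_zero_eq_vertLine (hD : b ^ 2 - a * b * r - a ^ 2 * s ≠ 0) {m₁ : F}
    (he : a * m₁ - a * r + b = 0) (k : F × F) :
    lambdaMap r s a b '' slopeLine r s (m₁, 0) k = vertLine (a • k) := by
  have hb : b = a * r - a * m₁ := by linear_combination he
  subst hb
  obtain ⟨k₁, k₂⟩ := k
  refine ((lambdaEquiv hD).bijOn' ?_ ?_).image_eq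
  · rintro ⟨⟨x₁, x₂⟩, ⟨y₁, y₂⟩⟩ hP
    simp only [mem_slopeLine, hallMul_mk_zero_s7, Prod.mk_add_mk, Prod.mk.injEq] at hP
    obtain ⟨rfl, rfl⟩ := hP
    simp only [mem_vertLine, lambdaEquiv_apply, lambdaMap, Prod.smul_mk, Prod.mk_add_mk,
      smul_eq_mul, Prod.mk.injEq]
    constructor <;> ring
  · rintro ⟨⟨x₁, x₂⟩, ⟨y₁, y₂⟩⟩ hQ
    simp only [mem_vertLine, Prod.smul_mk, smul_eq_mul, Prod.mk.injEq] at hQ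
    obtain ⟨rfl, rfl⟩ := hQ
    simp only [mem_slopeLine, lambdaEquiv_symm_apply, hallMul_mk_zero_s7, Prod.smul_mk,
      Prod.mk_add_mk, Prod.mk_sub_mk, smul_eq_mul, Prod.mk.injEq]
    generalize hdet : (a * r - a * m₁) ^ 2 - a * (a * r - a * m₁) * r - a ^ 2 * s = D at hD ⊢
    constructor <;> field_simp <;> subst hdet <;> ring

theorem image_slopeLine_of_snd_ne_zero (hD : b ^ 2 - a * b * r - a ^ 2 * s ≠ 0) {m : F × F}
    (hm : m.2 ≠ 0) (k : F × F) :
    lambdaMap r s a b '' slopeLine r s m k =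
      slopeLine r s m (-(a • hallMul r s k m) + b • k) := by
  obtain ⟨m₁, m₂⟩ := m
  obtain ⟨k₁, k₂⟩ := k
  refine ((lambdaEquiv hD).bijOn' ?_ ?_).image_eq
  · rintro ⟨⟨x₁, x₂⟩, ⟨y₁, y₂⟩⟩ hP
    simp only [mem_slopeLine, hallMul_of_snd_ne_zero_s7 _ hm, Prod.mk_add_mk, Prod.mk.injEq] at hP
    obtain ⟨rfl, rfl⟩ := hP
    simp only [mem_slopeLine, lambdaEquiv_apply, lambdaMap, hallMul_of_snd_ne_zero_s7 _ hm,
      Prod.smul_mk, Prod.neg_mk, Prod.mk_add_mk, smul_eq_mul, Prod.mk.injEq]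
    constructor <;> field_simp <;> ring
  · rintro ⟨⟨x₁, x₂⟩, ⟨y₁, y₂⟩⟩ hQ
    simp only [mem_slopeLine, hallMul_of_snd_ne_zero_s7 _ hm, Prod.smul_mk, Prod.neg_mk,
      Prod.mk_add_mk, smul_eq_mul, Prod.mk.injEq] at hQ
    obtain ⟨rfl, rfl⟩ := hQ
    simp only [mem_slopeLine, lambdaEquiv_symm_apply, hallMul_of_snd_ne_zero_s7 _ hm, Prod.smul_mk,
      Prod.mk_add_mk, Prod.mk_sub_mk, smul_eq_mul, Prod.mk.injEq]
    generalize hdet : b ^ 2 - a * b * r - a ^ 2 * s = D at hD ⊢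
    constructor <;> field_simp <;> subst hdet <;> ring

end Lambda

theorem lambda_collineation_general {F : Type*} [Field F] [DecidableEq F]
    (r s : F)
    (hirr : Irreducible (X ^ 2 - C r * X - C s : F[X]))
    (a b : F) (hab : (a, b) ≠ ((0 : F), (0 : F))) :
    IsCollineation r s (lambdaMap r s a b) ∧
    (∀ c : F × F,
      (a = 0 → lambdaMap r s a b '' vertLine c = vertLine (b • c)) ∧
      (a ≠ 0 → lambdaMap r s a b '' vertLine c =
        slopeLine r s (b / a, 0) ((-((b ^ 2 - a * b * r - a ^ 2 * s) / a)) • c))) ∧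
    (∀ m k : F × F, m.2 = 0 →
      (a = 0 → lambdaMap r s a b '' slopeLine r s m k = slopeLine r s m (b • k)) ∧
      (a ≠ 0 → m.1 = r - b / a →
        lambdaMap r s a b '' slopeLine r s m k = vertLine (a • k)) ∧
      (a ≠ 0 → m.1 ≠ r - b / a →
        lambdaMap r s a b '' slopeLine r s m k =
          slopeLine r s ((a * s + m.1 * b) / (a * m.1 - a * r + b), 0)
            (((b ^ 2 - a * b * r - a ^ 2 * s) / (a * m.1 - a * r + b)) • k))) ∧
    (∀ m k : F × F, m.2 ≠ 0 →
      lambdaMap r s a b '' slopeLine r s m k =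
        slopeLine r s m (-(a • hallMul r s k m) + b • k)) := by
  have hD := lambda_det_ne_zero hirr hab
  have hb : a = 0 → b ≠ 0 := by rintro rfl rfl; exact hab rfl
  refine ⟨⟨(lambdaEquiv hD).bijective, ?_⟩, fun c => ⟨?_, (image_vertLine_of_ne_zero hD · c)⟩, ?_,
    fun m k hm => image_slopeLine_of_snd_ne_zero hD hm k⟩
  · rintro ℓ (⟨c, rfl⟩ | ⟨⟨m₁, m₂⟩, k, rfl⟩)
    · rcases eq_or_ne a 0 with rfl | ha
      · exact .inl ⟨_, image_vertLine_of_eq_zero (hb rfl) c⟩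
      · exact .inr ⟨_, _, image_vertLine_of_ne_zero hD ha c⟩
    · rcases ne_or_eq m₂ 0 with hm | rfl
      · exact .inr ⟨_, _, image_slopeLine_of_snd_ne_zero hD hm k⟩
      rcases eq_or_ne (a * m₁ - a * r + b) 0 with he | he
      · exact .inl ⟨_, image_slopeLine_mk_zero_eq_vertLine hD he k⟩
      · exact .inr ⟨_, _, image_slopeLine_mk_zero hD he k⟩
  · rintro rfl
    exact image_vertLine_of_eq_zero (hb rfl) c
  · rintro ⟨m₁, m₂⟩ k (rfl : m₂ = 0)
    refine ⟨?_, fun ha hm => ?_, fun ha hm => ?_⟩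
    · rintro rfl
      exact image_slopeLine_mk_zero_of_eq_zero (hb rfl) m₁ k
    · exact image_slopeLine_mk_zero_eq_vertLine hD
        ((eq_sub_div_iff_mul_sub_mul_add_eq_zero ha).1 hm) k
    · exact image_slopeLine_mk_zero hD (mt (eq_sub_div_iff_mul_sub_mul_add_eq_zero ha).2 hm) k

/-- Every linear map `λ_{a,b}` (with `(a,b) ≠ (0,0)`) is a collineation of the Hall affine
plane, with the stated action on vertical lines, type 1 lines, and type 2 lines. -/
theorem lambda_collineation {F : Type*} [Field F] [Fintype F] [DecidableEq F]
    (q : ℕ) (hq : Fintype.card F = q) (r s : F)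
    (hirr : Irreducible (X ^ 2 - C r * X - C s : F[X]))
    (a b : F) (hab : (a, b) ≠ ((0 : F), (0 : F))) :
    IsCollineation r s (lambdaMap r s a b) ∧
    (∀ c : F × F,
      (a = 0 → lambdaMap r s a b '' vertLine c = vertLine (b • c)) ∧
      (a ≠ 0 → lambdaMap r s a b '' vertLine c =
        slopeLine r s (b / a, 0) ((-((b ^ 2 - a * b * r - a ^ 2 * s) / a)) • c))) ∧
    (∀ m k : F × F, m.2 = 0 →
      (a = 0 → lambdaMap r s a b '' slopeLine r s m k = slopeLine r s m (b • k)) ∧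
      (a ≠ 0 → m.1 = r - b / a →
        lambdaMap r s a b '' slopeLine r s m k = vertLine (a • k)) ∧
      (a ≠ 0 → m.1 ≠ r - b / a →
        lambdaMap r s a b '' slopeLine r s m k =
          slopeLine r s ((a * s + m.1 * b) / (a * m.1 - a * r + b), 0)
            (((b ^ 2 - a * b * r - a ^ 2 * s) / (a * m.1 - a * r + b)) • k))) ∧
    (∀ m k : F × F, m.2 ≠ 0 →
      lambdaMap r s a b '' slopeLine r s m k =
        slopeLine r s m (-(a • hallMul r s k m) + b • k)) :=
  lambda_collineation_general r s hirr a b hab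
end

section
/- The set LNR of all linear maps λ_{a,b} of the Hall affine plane A_H is a group under composition isomorphic to the multiplicative group of a field with q² elements (in particular, a cyclic group of order q² − 1); every λ_{a,b} maps each type 2 line to a type 2 line with the same slope (so LNR fixes each parallel class of NBF lines); and LNR acts transitively on the set of parallel classes of BF lines: for any two parallel classes of BF lines (including the class of vertical lines), some λ_{a,b} maps every line of the first class to a line of the second class. -/
open Polynomial

/-- The set `LNR` of all linear maps `λ_{a,b}`, `(a,b) ≠ (0,0)`. -/
def LNRset {F : Type*} [Field F] (r s : F) :
    Set ((F × F) × (F × F) → (F × F) × (F × F)) :=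
  {f | ∃ a b : F, (a, b) ≠ ((0 : F), (0 : F)) ∧ f = lambdaMap r s a b}

/-- The parallel classes of BF lines: the class of vertical lines (`none`) and,
for each `μ ∈ F`, the class of type 1 lines of slope `(μ, 0)`. -/
def BFclass {F : Type*} [Field F] [DecidableEq F] (r s : F) :
    Option F → Set (Set ((F × F) × (F × F)))
  | none => {ℓ | ∃ c : F × F, ℓ = vertLine c}
  | some μ => {ℓ | ∃ k : F × F, ℓ = slopeLine r s (μ, 0) k}

/-! Let `β` be a root of `x² - r x - s` in `K = F[x]/(x² - r x - s)`, a field with `q²`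
elements. The coordinates `(a, b) ↦ b - a β` identify `F²` with `K` and turn composition of the
maps `λ_{a,b}` into multiplication in `K`, so `LNR ≅ Kˣ`, which is cyclic of order `q² - 1`.

For a type 2 slope `m`, right multiplication `R : x ↦ x·m` is `F`-linear with characteristic
polynomial `x² - r x - s`, so `R² = r R + s`, and this identity is exactly what makes `λ_{a,b}`
map `[m, k]` into `[m, b k - a (k·m)]`. Finally `λ_{1,μ}` sends vertical lines to lines of
slope `(μ, 0)`, and `λ_{1,r-μ}` sends lines of slope `(μ, 0)` to vertical lines because
`μ² - rμ - s ≠ 0`; composing these gives transitivity on the BF parallel classes. -/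

section HallField

variable {F : Type*} [Field F] (r s : F)

noncomputable abbrev hallPoly : F[X] := X ^ 2 - C r * X - C s

theorem hallPoly_natDegree : (hallPoly r s).natDegree = 2 := by
  unfold hallPoly; compute_degree!

theorem hallPoly_monic : (hallPoly r s).Monic := by
  unfold hallPoly; monicity!

theorem hallPoly_eval_ne_zero (hirr : Irreducible (hallPoly r s)) (t : F) :
    t ^ 2 - r * t - s ≠ 0 := by
  intro ht
  have := natDegree_eq_of_degree_eq_some
    (degree_eq_one_of_irreducible_of_root hirr (x := t) (by simpa using ht))
  rw [hallPoly_natDegree] at this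
  norm_num at this

noncomputable def hallCoord (p : F × F) : AdjoinRoot (hallPoly r s) :=
  AdjoinRoot.of _ p.2 - AdjoinRoot.of _ p.1 * AdjoinRoot.root _

theorem hallCoord_mul (p q : F × F) :
    hallCoord r s (p.1 * q.2 + q.1 * p.2 - r * p.1 * q.1, p.2 * q.2 + s * p.1 * q.1) =
      hallCoord r s p * hallCoord r s q := by
  have hroot : AdjoinRoot.root (hallPoly r s) ^ 2 =
      AdjoinRoot.of _ r * AdjoinRoot.root _ + AdjoinRoot.of _ s := by
    have := AdjoinRoot.eval₂_root (hallPoly r s)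
    simp only [eval₂_sub, eval₂_X_pow, eval₂_mul, eval₂_C, eval₂_X] at this
    linear_combination this
  simp only [hallCoord, map_add, map_sub, map_mul]
  linear_combination (-(AdjoinRoot.of _ p.1 * AdjoinRoot.of _ q.1)) * hroot

theorem hallCoord_eq_zero {p : F × F} (hp : hallCoord r s p = 0) : p = 0 := by
  have hdvd : hallPoly r s ∣ C p.2 - C p.1 * X := by
    rw [← AdjoinRoot.mk_eq_zero]; simpa [hallCoord] using hp
  have hdeg : (C p.2 - C p.1 * X).natDegree ≤ 1 := by compute_degree
  have hzero := eq_zero_of_dvd_of_natDegree_lt hdvd (by rw [hallPoly_natDegree]; omega)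
  ext
  · simpa using congrArg (coeff · 1) hzero
  · simpa using congrArg (coeff · 0) hzero

theorem hallCoord_eq_zero_iff {p : F × F} : hallCoord r s p = 0 ↔ p = 0 :=
  ⟨hallCoord_eq_zero r s, fun h => by simp [h, hallCoord]⟩

theorem hallCoord_injective : Function.Injective (hallCoord r s) := by
  intro p q hpq
  refine sub_eq_zero.1 (hallCoord_eq_zero r s ?_)
  simp only [hallCoord, Prod.fst_sub, Prod.snd_sub, map_sub] at hpq ⊢
  linear_combination hpq

theorem hallCoord_surjective : Function.Surjective (hallCoord r s) := by
  intro z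
  obtain ⟨f, rfl⟩ := AdjoinRoot.mk_surjective z
  set g := f %ₘ hallPoly r s
  have hg : g.degree ≤ 1 := by
    have := degree_modByMonic_lt f (hallPoly_monic r s)
    rw [degree_eq_natDegree (hallPoly_monic r s).ne_zero, hallPoly_natDegree] at this
    exact Order.le_of_lt_succ this
  refine ⟨(-g.coeff 1, g.coeff 0), ?_⟩
  calc hallCoord r s (-g.coeff 1, g.coeff 0)
      = AdjoinRoot.mk _ (C (g.coeff 1) * X + C (g.coeff 0)) := by simp [hallCoord]; ring
    _ = AdjoinRoot.mk _ g := by rw [← eq_X_add_C_of_degree_le_one hg]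
    _ = AdjoinRoot.mk _ f := by
      simpa only [AdjoinRoot.modByMonicHom_mk] using
        AdjoinRoot.mk_leftInverse (hallPoly_monic r s) (AdjoinRoot.mk _ f)

end HallField

section LNRGroup

variable {F : Type*} [Field F] (r s : F)

theorem lambdaMap_comp (a b a' b' : F) : lambdaMap r s a b ∘ lambdaMap r s a' b' =
    lambdaMap r s (a * b' + a' * b - r * a * a') (b * b' + s * a * a') := by
  funext P
  simp only [lambdaMap, Function.comp_apply]
  ext : 1 <;> module

theorem lambdaMap_zero_one : lambdaMap r s 0 1 = id := by
  funext P; simp [lambdaMap]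

theorem id_mem_LNRset : id ∈ LNRset r s :=
  ⟨0, 1, by simp, (lambdaMap_zero_one r s).symm⟩

theorem lambdaMap_injective : Function.Injective fun p : F × F => lambdaMap r s p.1 p.2 := by
  intro p q h
  simpa [lambdaMap, Prod.ext_iff] using congrFun h (0, (1, 0))

noncomputable def hallEquiv : F × F ≃ AdjoinRoot (hallPoly r s) :=
  Equiv.ofBijective _ ⟨hallCoord_injective r s, hallCoord_surjective r s⟩

noncomputable def lambdaOf (z : AdjoinRoot (hallPoly r s)) :
    (F × F) × (F × F) → (F × F) × (F × F) :=
  lambdaMap r s ((hallEquiv r s).symm z).1 ((hallEquiv r s).symm z).2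

theorem lambdaOf_hallCoord (p : F × F) :
    lambdaOf r s (hallCoord r s p) = lambdaMap r s p.1 p.2 := by
  rw [lambdaOf, show (hallEquiv r s).symm (hallCoord r s p) = p from
    (hallEquiv r s).symm_apply_apply p]

theorem LNRset_eq_image : LNRset r s = lambdaOf r s '' {z | z ≠ 0} := by
  ext f
  constructor
  · rintro ⟨a, b, hab, rfl⟩
    exact ⟨hallCoord r s (a, b), (hallCoord_eq_zero_iff r s).not.2 hab,
      lambdaOf_hallCoord r s _⟩
  · rintro ⟨z, hz, rfl⟩
    obtain ⟨p, rfl⟩ := hallCoord_surjective r s z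
    exact ⟨p.1, p.2, (hallCoord_eq_zero_iff r s).not.1 hz, lambdaOf_hallCoord r s p⟩

theorem lambdaOf_mul (z w : AdjoinRoot (hallPoly r s)) :
    lambdaOf r s (z * w) = lambdaOf r s z ∘ lambdaOf r s w := by
  obtain ⟨p, rfl⟩ := hallCoord_surjective r s z
  obtain ⟨q, rfl⟩ := hallCoord_surjective r s w
  rw [← hallCoord_mul, lambdaOf_hallCoord, lambdaOf_hallCoord, lambdaOf_hallCoord,
    lambdaMap_comp]

theorem lambdaOf_one : lambdaOf r s 1 = id := by
  have : hallCoord r s (0, 1) = 1 := by simp [hallCoord]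
  rw [← this, lambdaOf_hallCoord, lambdaMap_zero_one]

theorem lambdaOf_pow (z : AdjoinRoot (hallPoly r s)) (n : ℕ) :
    lambdaOf r s (z ^ n) = (lambdaOf r s z)^[n] := by
  induction n with
  | zero => rw [pow_zero, lambdaOf_one, Function.iterate_zero]
  | succ n ih => rw [pow_succ, lambdaOf_mul, ih, Function.iterate_succ]

theorem lambdaOf_injective : Function.Injective (lambdaOf r s) :=
  (lambdaMap_injective r s).comp (hallEquiv r s).symm.injective

instance [Finite F] : Finite (AdjoinRoot (hallPoly r s)) := .of_equiv _ (hallEquiv r s)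

theorem ncard_LNRset [Finite F] : (LNRset r s).ncard = Nat.card F ^ 2 - 1 := by
  rw [LNRset_eq_image, Set.ncard_image_of_injective _ (lambdaOf_injective r s),
    show {z : AdjoinRoot (hallPoly r s) | z ≠ 0} = {0}ᶜ from rfl, Set.ncard_compl,
    Set.ncard_singleton, ← Nat.card_congr (hallEquiv r s), Nat.card_prod, sq]

variable [Fact (Irreducible (hallPoly r s))]

theorem lambdaOf_comp_inv {z : AdjoinRoot (hallPoly r s)} (hz : z ≠ 0) :
    lambdaOf r s z ∘ lambdaOf r s z⁻¹ = id := by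
  rw [← lambdaOf_mul, mul_inv_cancel₀ hz, lambdaOf_one]

theorem lambdaOf_inv_comp {z : AdjoinRoot (hallPoly r s)} (hz : z ≠ 0) :
    lambdaOf r s z⁻¹ ∘ lambdaOf r s z = id := by
  rw [← lambdaOf_mul, inv_mul_cancel₀ hz, lambdaOf_one]

theorem comp_mem_LNRset {f g} (hf : f ∈ LNRset r s) (hg : g ∈ LNRset r s) :
    f ∘ g ∈ LNRset r s := by
  rw [LNRset_eq_image] at hf hg ⊢
  obtain ⟨z, hz, rfl⟩ := hf
  obtain ⟨w, hw, rfl⟩ := hg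
  exact ⟨z * w, mul_ne_zero hz hw, lambdaOf_mul r s z w⟩

theorem exists_inverse_mem_LNRset {f} (hf : f ∈ LNRset r s) :
    ∃ g ∈ LNRset r s, f ∘ g = id ∧ g ∘ f = id := by
  rw [LNRset_eq_image] at hf ⊢
  obtain ⟨z, hz, rfl⟩ := hf
  exact ⟨_, ⟨z⁻¹, inv_ne_zero hz, rfl⟩, lambdaOf_comp_inv r s hz,
    lambdaOf_inv_comp r s hz⟩

theorem exists_iterate_generator_LNRset [Finite F] :
    ∃ g ∈ LNRset r s, ∀ f ∈ LNRset r s, ∃ n : ℕ, f = g^[n] := by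
  obtain ⟨ζ, hζ⟩ := IsCyclic.exists_monoid_generator (α := (AdjoinRoot (hallPoly r s))ˣ)
  simp_rw [LNRset_eq_image]
  refine ⟨_, ⟨ζ, ζ.ne_zero, rfl⟩, ?_⟩
  rintro _ ⟨z, hz, rfl⟩
  obtain ⟨n, hn⟩ := (Submonoid.mem_powers_iff _ _).1 (hζ (Units.mk0 z hz))
  exact ⟨n, by rw [← lambdaOf_pow, ← Units.val_pow_eq_pow_val, hn, Units.val_mk0]⟩

end LNRGroup

section HallGeometry

variable {F : Type*} [Field F] [DecidableEq F] (r s : F)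

def hallRightMul (m : F × F) : (F × F) →ₗ[F] F × F where
  toFun x := hallMul r s x m
  map_add' x y := by unfold hallMul; split_ifs <;> ext <;> simp only [Prod.fst_add,
    Prod.snd_add] <;> ring
  map_smul' t x := by unfold hallMul; split_ifs <;> ext <;> simp only [Prod.smul_fst,
    Prod.smul_snd, smul_eq_mul, RingHom.id_apply] <;> ring

theorem hallRightMul_apply (x m : F × F) : hallRightMul r s m x = hallMul r s x m := rfl

theorem hallRightMul_apply_apply {m : F × F} (hm : m.2 ≠ 0) (x : F × F) :
    hallRightMul r s m (hallRightMul r s m x) = r • hallRightMul r s m x + s • x := by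
  simp only [hallRightMul_apply, hallMul, if_neg hm]
  ext <;> simp only [Prod.smul_fst, Prod.smul_snd, Prod.fst_add, Prod.snd_add, smul_eq_mul] <;>
    field_simp <;> ring

theorem mk_zero_mem_slopeLine_iff (m k y : F × F) :
    ((0 : F × F), y) ∈ slopeLine r s m k ↔ y = k := by
  simp [slopeLine, ← hallRightMul_apply]

theorem lambdaMap_mapsTo_slopeLine (a b : F) {m : F × F} (hm : m.2 ≠ 0) (k : F × F) :
    Set.MapsTo (lambdaMap r s a b) (slopeLine r s m k)
      (slopeLine r s m (b • k - a • hallMul r s k m)) := by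
  intro P hP
  simp only [slopeLine, Set.mem_ofPred_eq, lambdaMap, ← hallRightMul_apply] at hP ⊢
  rw [hP]
  simp only [map_add, map_smul, hallRightMul_apply_apply r s hm]
  module

theorem lambdaMap_image_slopeLine {a b a' b' : F}
    (hinv : Function.LeftInverse (lambdaMap r s a' b') (lambdaMap r s a b))
    (hinv' : Function.RightInverse (lambdaMap r s a' b') (lambdaMap r s a b))
    {m : F × F} (hm : m.2 ≠ 0) (k : F × F) :
    lambdaMap r s a b '' slopeLine r s m k = slopeLine r s m (b • k - a • hallMul r s k m) := by
  set k' := b • k - a • hallMul r s k m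
  have hback := lambdaMap_mapsTo_slopeLine r s a' b' hm k'
  -- the inverse carries the line with intercept `k'` to the parallel line through `(0, k)`
  have hk : b' • k' - a' • hallMul r s k' m = k := by
    have h0 : ((0 : F × F), k) ∈ slopeLine r s m k := (mk_zero_mem_slopeLine_iff r s m k k).2 rfl
    have := hback (lambdaMap_mapsTo_slopeLine r s a b hm k h0)
    rw [hinv] at this
    exact ((mk_zero_mem_slopeLine_iff r s m _ k).1 this).symm
  rw [hk] at hback
  exact (Set.InvOn.bijOn ⟨hinv.leftInvOn _, hinv'.leftInvOn _⟩
    (lambdaMap_mapsTo_slopeLine r s a b hm k) hback).image_eq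

theorem slopeLine_type1 (μ : F) (k : F × F) :
    slopeLine r s (μ, 0) k = {P | P.2 = μ • P.1 + k} := by
  ext P; simp [slopeLine, hallMul, Prod.ext_iff, mul_comm]

theorem lambdaMap_image_vertLine (μ : F) (c : F × F) :
    lambdaMap r s 1 μ '' vertLine c = slopeLine r s (μ, 0) ((s - μ * (μ - r)) • c) := by
  rw [slopeLine_type1]
  ext Q
  constructor
  · rintro ⟨P, hP, rfl⟩
    simp only [vertLine, Set.mem_ofPred_eq] at hP
    simp only [lambdaMap, Set.mem_ofPred_eq, hP]
    module
  · intro hQ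
    simp only [Set.mem_ofPred_eq] at hQ
    refine ⟨(c, Q.1 - (μ - r) • c), rfl, ?_⟩
    ext : 1
    · simp only [lambdaMap]; module
    · simp only [lambdaMap, hQ]; module

theorem lambdaMap_image_slopeLine_type1 {μ : F} (hμ : μ ^ 2 - r * μ - s ≠ 0) (k : F × F) :
    lambdaMap r s 1 (r - μ) '' slopeLine r s (μ, 0) k = vertLine k := by
  rw [slopeLine_type1]
  ext Q
  constructor
  · rintro ⟨P, hP, rfl⟩
    simp only [Set.mem_ofPred_eq] at hP
    simp only [lambdaMap, vertLine, Set.mem_ofPred_eq, hP]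
    module
  · intro hQ
    simp only [vertLine, Set.mem_ofPred_eq] at hQ
    set x := (s + r * μ - μ ^ 2)⁻¹ • (Q.2 - (r - μ) • k)
    have hc : s + r * μ - μ ^ 2 ≠ 0 := fun h => hμ (by linear_combination -h)
    refine ⟨(x, μ • x + k), rfl, ?_⟩
    ext : 1
    · simp only [lambdaMap, hQ]; module
    · simp only [lambdaMap, x]; match_scalars <;> field_simp <;> ring

theorem exists_LNRset_vertical_to_BFclass (d : Option F) :
    ∃ f ∈ LNRset r s, ∀ ℓ ∈ BFclass r s none, f '' ℓ ∈ BFclass r s d := by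
  cases d with
  | none => exact ⟨id, id_mem_LNRset r s, fun ℓ hℓ => by rwa [Set.image_id]⟩
  | some μ =>
    refine ⟨lambdaMap r s 1 μ, ⟨1, μ, by simp, rfl⟩, ?_⟩
    rintro _ ⟨c, rfl⟩
    exact ⟨_, lambdaMap_image_vertLine r s μ c⟩

end HallGeometry

section HallLNR

variable {F : Type*} [Field F] [DecidableEq F] (r s : F) [Fact (Irreducible (hallPoly r s))]

theorem image_slopeLine_of_mem_LNRset {f} (hf : f ∈ LNRset r s) {m : F × F} (hm : m.2 ≠ 0)
    (k : F × F) : ∃ k', f '' slopeLine r s m k = slopeLine r s m k' := by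
  obtain ⟨g, ⟨a', b', -, rfl⟩, hfg, hgf⟩ := exists_inverse_mem_LNRset r s hf
  obtain ⟨a, b, -, rfl⟩ := hf
  exact ⟨_, lambdaMap_image_slopeLine r s (congrFun hgf) (congrFun hfg) hm k⟩

theorem exists_LNRset_BFclass_to_vertical (d : Option F) :
    ∃ f ∈ LNRset r s, ∀ ℓ ∈ BFclass r s d, f '' ℓ ∈ BFclass r s none := by
  cases d with
  | none => exact ⟨id, id_mem_LNRset r s, fun ℓ hℓ => by rwa [Set.image_id]⟩
  | some μ =>
    have hμ := hallPoly_eval_ne_zero r s Fact.out μ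
    refine ⟨lambdaMap r s 1 (r - μ), ⟨1, r - μ, by simp, rfl⟩, ?_⟩
    rintro _ ⟨k, rfl⟩
    exact ⟨k, lambdaMap_image_slopeLine_type1 r s hμ k⟩

theorem exists_LNRset_BFclass_to_BFclass (d d' : Option F) :
    ∃ f ∈ LNRset r s, ∀ ℓ ∈ BFclass r s d, f '' ℓ ∈ BFclass r s d' := by
  obtain ⟨f, hf, hfd⟩ := exists_LNRset_BFclass_to_vertical r s d
  obtain ⟨g, hg, hgd⟩ := exists_LNRset_vertical_to_BFclass r s d'
  exact ⟨g ∘ f, comp_mem_LNRset r s hg hf, fun ℓ hℓ => by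
    rw [Set.image_comp]; exact hgd _ (hfd ℓ hℓ)⟩

end HallLNR

/-- `LNR` is a group under composition, isomorphic to the multiplicative group of the field
`F[α]` with `q²` elements (composition corresponds to the multiplication
`(a,b)·(a',b') = (ab' + a'b - raa', bb' + saa')` of `F[α]`, `α² = -rα + s`); in particular
it is cyclic of order `q² - 1`. Each `λ_{a,b}` maps every type 2 line to a type 2 line of
the same slope, and `LNR` is transitive on the parallel classes of BF lines. -/
theorem LNR_linear_group {F : Type*} [Field F] [Fintype F] [DecidableEq F]
    (q : ℕ) (hq : Fintype.card F = q) (r s : F)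
    (hirr : Irreducible (X ^ 2 - C r * X - C s : F[X])) :
    (id ∈ LNRset (F := F) r s) ∧
    (∀ f ∈ LNRset (F := F) r s, ∀ g ∈ LNRset (F := F) r s, f ∘ g ∈ LNRset (F := F) r s) ∧
    (∀ f ∈ LNRset (F := F) r s, Function.Bijective f ∧
      ∃ g ∈ LNRset (F := F) r s, f ∘ g = id ∧ g ∘ f = id) ∧
    (∀ a b a' b' : F, lambdaMap r s a b ∘ lambdaMap r s a' b' =
      lambdaMap r s (a * b' + a' * b - r * a * a') (b * b' + s * a * a')) ∧
    (∃ g ∈ LNRset (F := F) r s, ∀ f ∈ LNRset (F := F) r s, ∃ n : ℕ, f = g^[n]) ∧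
    ((LNRset (F := F) r s).ncard = q ^ 2 - 1) ∧
    (∀ f ∈ LNRset (F := F) r s, ∀ m k : F × F, m.2 ≠ 0 →
      ∃ k' : F × F, f '' slopeLine r s m k = slopeLine r s m k') ∧
    (∀ d d' : Option F, ∃ f ∈ LNRset (F := F) r s,
      ∀ ℓ ∈ BFclass r s d, f '' ℓ ∈ BFclass r s d') := by
  have : Fact (Irreducible (hallPoly r s)) := ⟨hirr⟩
  have hbij : ∀ f ∈ LNRset r s, Function.Bijective f ∧
      ∃ g ∈ LNRset r s, f ∘ g = id ∧ g ∘ f = id := fun f hf => by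
    obtain ⟨g, hg, hfg, hgf⟩ := exists_inverse_mem_LNRset r s hf
    exact ⟨Function.bijective_iff_has_inverse.2 ⟨g, congrFun hgf, congrFun hfg⟩,
      g, hg, hfg, hgf⟩
  exact ⟨id_mem_LNRset r s, fun f hf g hg => comp_mem_LNRset r s hf hg, hbij, lambdaMap_comp r s,
    exists_iterate_generator_LNRset r s, by rw [ncard_LNRset, Nat.card_eq_fintype_card, hq],
    fun f hf m k hm => image_slopeLine_of_mem_LNRset r s hf hm k,
    exists_LNRset_BFclass_to_BFclass r s⟩
end

section
/- Let (ℓ1', ℓ2') be any ordered pair of distinct intersecting lines of the Hall affine plane A_H. Then there exists a collineation φ of A_H such that φ(ℓ1') is the line ℓ1, where ℓ1 is the vertical line x = (0,0) if ℓ1' ∈ BF, and ℓ1 is the line y = x·(0,1) if ℓ1' ∈ NBF; setting ℓ2 = φ(ℓ2'), the lines ℓ1 and ℓ2 meet at the origin O = ((0,0),(0,0)). Moreover, for any two points P, Q on ℓ1 with P, Q ≠ O, there is a collineation fixing O, mapping each of ℓ1 and ℓ2 onto itself, and mapping P to Q; and likewise for any two points P, Q on ℓ2 with P, Q ≠ O,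 there is a collineation fixing O, mapping each of ℓ1 and ℓ2 onto itself, and mapping P to Q. -/
open Polynomial

/-- The BF lines: vertical lines and type 1 lines (slope in the basefield). -/
def BFlines {F : Type*} [Field F] [DecidableEq F] (r s : F) :
    Set (Set ((F × F) × (F × F))) :=
  {ℓ | (∃ c : F × F, ℓ = vertLine c) ∨ ∃ m k : F × F, m.2 = 0 ∧ ℓ = slopeLine r s m k}

/-- The NBF lines: type 2 lines (slope not in the basefield). -/
def NBFlines {F : Type*} [Field F] [DecidableEq F] (r s : F) :
    Set (Set ((F × F) × (F × F))) :=
  {ℓ | ∃ m k : F × F, m.2 ≠ 0 ∧ ℓ = slopeLine r s m k}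

/-!
Right multiplication by a slope `m` is an `F`-linear operator `R_m` on `V = F × F`: a scalar
when `m` is of type 1, and otherwise an operator with `R_m² = r R_m + s`. Since `f` has no root,
such an operator has no eigenvector, so `p, T p` is a basis for every `p ≠ 0`; hence the type 2
slopes are exactly the operators annihilated by `f`, and any two of them are conjugate. Besides
the translations this gives two families of collineations fixing the origin:
`(x, y) ↦ (L x, L y)` for `L ∈ GL(V)`, and `(x, y) ↦ (a x + b y, b s x + (a + b r) y)`, which is
`a + b C` for the companion matrix `C` of `f` acting on the pair `(x, y)`.

A translation moves the common point of the two lines to the origin, and one linear map of the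
first or second kind moves the first line to `x = 0` or `y = x·(0,1)`. For transitivity, the
units `a + b R_n` of the field `F[R_n]` act regularly on `V ∖ 0`; the first family with such `L`
fixes every BF line through the origin and the graph of `R_n`, and the second family fixes every
type 2 line through the origin, acting on the graph of `R_m` as `a + b R_m`.
-/

theorem Irreducible.sq_sub_mul_sub_ne_zero {F : Type*} [Field F] {r s : F}
    (hirr : Irreducible (X ^ 2 - C r * X - C s : F[X])) (t : F) : t ^ 2 - r * t - s ≠ 0 := by
  have hdeg : (X ^ 2 - C r * X - C s : F[X]).natDegree = 2 := by compute_degree!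
  simpa using hirr.not_isRoot_of_natDegree_ne_one (x := t) (by rw [hdeg]; decide)

theorem image_range_eq_range_of_comp_eq {α β : Type*} {Φ : β → β} {ι ι' : α → β}
    {L : α → α} (hL : Function.Surjective L) (h : Φ ∘ ι = ι' ∘ L) :
    Φ '' Set.range ι = Set.range ι' := by
  rw [← Set.range_comp, h, hL.range_comp]

theorem exists_ne_zero_apply_eq {α β E : Type*} [Zero α] [Zero β] [FunLike E α β]
    [ZeroHomClass E α β] {ι : E} {P : β}
    (hP : P ∈ Set.range ι) (hP0 : P ≠ 0) : ∃ p, p ≠ 0 ∧ ι p = P := by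
  obtain ⟨p, rfl⟩ := hP
  exact ⟨p, fun h => hP0 (by rw [h, map_zero]), rfl⟩

theorem image_sub_vertLine {F : Type*} [AddGroup F] (c : F × F) (v : (F × F) × (F × F)) :
    (· - v) '' vertLine c = vertLine (c - v.1) := by
  ext P
  simp [Set.image_sub_right, vertLine, eq_sub_iff_add_eq]

section QuadraticOperator

variable {F M : Type*} [Field F] [AddCommGroup M] [Module F M] {r s : F}
  {T : Module.End F M}

theorem apply_apply_of_mul_self_eq (hT : T * T = r • T + s • 1) (v : M) :
    T (T v) = r • T v + s • v := by
  simpa using LinearMap.congr_fun hT v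

theorem eq_zero_of_apply_eq_smul (hf : ∀ t : F, t ^ 2 - r * t - s ≠ 0)
    (hT : T * T = r • T + s • 1) {v : M} {t : F} (hv : T v = t • v) : v = 0 := by
  have h := apply_apply_of_mul_self_eq hT v
  rw [hv, map_smul, hv, smul_smul] at h
  have : (t ^ 2 - r * t - s) • v = 0 := by rw [sub_smul, sub_smul, sq, h]; module
  exact (smul_eq_zero.mp this).resolve_left (hf t)

theorem eq_zero_of_smul_add_smul_apply_eq_zero (hf : ∀ t : F, t ^ 2 - r * t - s ≠ 0)
    (hT : T * T = r • T + s • 1) {v : M} {a b : F} (h : a • v + b • T v = 0) :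
    v = 0 ∨ (a, b) = 0 := by
  by_cases hb : b = 0
  · subst hb
    rw [zero_smul, add_zero, smul_eq_zero] at h
    exact h.symm.imp id fun ha => by simp [ha]
  · refine .inl (eq_zero_of_apply_eq_smul hf hT (t := -(a / b)) ?_)
    calc T v = b⁻¹ • (b • T v) := by rw [smul_smul, inv_mul_cancel₀ hb, one_smul]
      _ = b⁻¹ • -(a • v) := by rw [eq_neg_of_add_eq_zero_right h]
      _ = -(a / b) • v := by module

theorem bijective_smul_one_add_smul [FiniteDimensional F M]
    (hf : ∀ t : F, t ^ 2 - r * t - s ≠ 0) (hT : T * T = r • T + s • 1) {a b : F}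
    (hab : (a, b) ≠ 0) : Function.Bijective (a • 1 + b • T : Module.End F M) := by
  have hinj : Function.Injective (a • 1 + b • T : Module.End F M) := by
    refine (injective_iff_map_eq_zero _).mpr fun v hv => ?_
    exact (eq_zero_of_smul_add_smul_apply_eq_zero hf hT (by simpa using hv)).resolve_right hab
  exact ⟨hinj, LinearMap.injective_iff_surjective.mp hinj⟩

def cyclicMap (T : Module.End F M) (p : M) : (F × F) →ₗ[F] M :=
  (LinearMap.toSpanSingleton F M p).coprod (LinearMap.toSpanSingleton F M (T p))

@[simp]
theorem cyclicMap_apply (p : M) (x : F × F) : cyclicMap T p x = x.1 • p + x.2 • T p := rfl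

theorem cyclicMap_bijective [FiniteDimensional F M] (hM : Module.finrank F M = 2)
    (hf : ∀ t : F, t ^ 2 - r * t - s ≠ 0) (hT : T * T = r • T + s • 1) {p : M}
    (hp : p ≠ 0) : Function.Bijective (cyclicMap T p) := by
  have hinj : Function.Injective (cyclicMap T p) :=
    (injective_iff_map_eq_zero _).mpr fun x hx =>
      (eq_zero_of_smul_add_smul_apply_eq_zero hf hT hx).resolve_left hp
  refine ⟨hinj, (LinearMap.injective_iff_surjective_of_finrank_eq_finrank ?_).mp hinj⟩
  simp [hM]

theorem exists_smul_one_add_smul_apply_eq [FiniteDimensional F M]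
    (hM : Module.finrank F M = 2) (hf : ∀ t : F, t ^ 2 - r * t - s ≠ 0)
    (hT : T * T = r • T + s • 1) {p q : M} (hp : p ≠ 0) (hq : q ≠ 0) :
    ∃ a b : F, (a, b) ≠ 0 ∧ (a • 1 + b • T) p = q := by
  obtain ⟨x, hx⟩ := (cyclicMap_bijective hM hf hT hp).2 q
  refine ⟨x.1, x.2, fun h0 => hq ?_, by simpa using hx⟩
  rw [← hx, show x = 0 from h0, map_zero]

theorem eq_of_apply_eq_of_mul_self_eq [FiniteDimensional F M] (hM : Module.finrank F M = 2)
    (hf : ∀ t : F, t ^ 2 - r * t - s ≠ 0) {T' : Module.End F M}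
    (hT : T * T = r • T + s • 1) (hT' : T' * T' = r • T' + s • 1) {p : M} (hp : p ≠ 0)
    (h : T p = T' p) : T = T' := by
  ext q
  obtain ⟨x, rfl⟩ := (cyclicMap_bijective hM hf hT hp).2 q
  simp only [cyclicMap_apply, map_add, map_smul, apply_apply_of_mul_self_eq hT]
  rw [h, apply_apply_of_mul_self_eq hT']

theorem conjAlgEquiv_mul_self (hT : T * T = r • T + s • 1)
    (L : M ≃ₗ[F] M) :
    L.conjAlgEquiv F T * L.conjAlgEquiv F T = r • L.conjAlgEquiv F T + s • 1 := by
  rw [← map_mul, hT, map_add, map_smul, map_smul, map_one]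

theorem exists_conjAlgEquiv_eq [FiniteDimensional F M] (hM : Module.finrank F M = 2)
    (hf : ∀ t : F, t ^ 2 - r * t - s ≠ 0) {T' : Module.End F M}
    (hT : T * T = r • T + s • 1) (hT' : T' * T' = r • T' + s • 1) :
    ∃ L : M ≃ₗ[F] M, L.conjAlgEquiv F T = T' := by
  have : Nontrivial M := Module.nontrivial_of_finrank_eq_succ hM
  obtain ⟨p, hp⟩ := exists_ne (0 : M)
  let C := LinearEquiv.ofBijective _ (cyclicMap_bijective hM hf hT hp)
  let C' := LinearEquiv.ofBijective _ (cyclicMap_bijective hM hf hT' hp)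
  refine ⟨C.symm.trans C',
    eq_of_apply_eq_of_mul_self_eq hM hf (conjAlgEquiv_mul_self hT _) hT' hp ?_⟩
  have hC' : C'.symm p = (1, 0) := C'.symm_apply_eq.mpr (by simp [C'])
  have hCT : C.symm (T p) = (0, 1) := C.symm_apply_eq.mpr (by simp [C])
  simp only [LinearEquiv.conjAlgEquiv_apply, LinearMap.comp_apply, LinearEquiv.coe_coe,
    LinearEquiv.trans_apply, LinearEquiv.symm_trans_apply, hC']
  simp [C, hCT, C']

end QuadraticOperator

section Companion

variable {F M : Type*} [Field F] [AddCommGroup M] [Module F M]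

def companion (r s : F) : Module.End F (M × M) :=
  (LinearMap.snd F M M).prod (s • LinearMap.fst F M M + r • LinearMap.snd F M M)

@[simp]
theorem companion_apply (r s : F) (x : M × M) : companion r s x = (x.2, s • x.1 + r • x.2) :=
  rfl

theorem companion_mul_self (r s : F) :
    companion r s * companion r s = r • companion r s + (s • 1 : Module.End F (M × M)) := by
  refine LinearMap.ext fun x => Prod.ext ?_ ?_ <;> simp <;> module

/-- For `u ≠ 0` the range is the BF line through the origin with direction `u`: `(0, 1)` gives
`x = 0` and `(1, t)` gives `y = x·(t, 0)`. -/
def regulusEmb (u : F × F) : M →ₗ[F] M × M :=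
  (u.1 • LinearMap.id).prod (u.2 • LinearMap.id)

@[simp]
theorem regulusEmb_apply (u : F × F) (v : M) : regulusEmb u v = (u.1 • v, u.2 • v) := rfl

theorem range_regulusEmb_of_fst_eq_zero {u : F × F} (h1 : u.1 = 0) (h2 : u.2 ≠ 0) :
    Set.range (regulusEmb u) = vertLine (0 : F × F) := by
  ext ⟨x, y⟩
  simp only [Set.mem_range, regulusEmb_apply, h1, zero_smul, vertLine, Prod.mk.injEq]
  refine ⟨fun ⟨v, hv, _⟩ => hv.symm, fun hx => ⟨u.2⁻¹ • y, hx.symm, ?_⟩⟩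
  rw [smul_smul, mul_inv_cancel₀ h2, one_smul]

end Companion

section HallLines

variable {F : Type*} [Field F] [DecidableEq F] {r s : F}

def hallMulRight (r s : F) (m : F × F) : Module.End F (F × F) where
  toFun x := hallMul r s x m
  map_add' x y := by unfold hallMul; split_ifs <;> ext <;> simp <;> ring
  map_smul' t x := by unfold hallMul; split_ifs <;> ext <;> simp <;> ring

theorem hallMulRight_apply (m x : F × F) : hallMulRight r s m x = hallMul r s x m := rfl

theorem hallMulRight_one_zero (m : F × F) : hallMulRight r s m (1, 0) = m := by
  rw [hallMulRight_apply, hallMul]; split_ifs with hm <;> ext <;> simp [hm]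

theorem hallMulRight_mul_self {m : F × F} (hm : m.2 ≠ 0) :
    hallMulRight r s m * hallMulRight r s m = r • hallMulRight r s m + s • 1 := by
  ext <;> simp [hallMulRight_apply, hallMul, hm] <;> field_simp <;> ring

theorem eq_hallMulRight (hf : ∀ t : F, t ^ 2 - r * t - s ≠ 0) {T : Module.End F (F × F)}
    (hT : T * T = r • T + s • 1) : T = hallMulRight r s (T (1, 0)) := by
  have hm : (T (1, 0)).2 ≠ 0 := by
    intro h0
    have h1 : T (1, 0) = (T (1, 0)).1 • ((1, 0) : F × F) := by ext <;> simp [h0]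
    simpa using eq_zero_of_apply_eq_smul hf hT h1
  exact eq_of_apply_eq_of_mul_self_eq (by simp) hf hT (hallMulRight_mul_self hm) (p := (1, 0))
    (by simp) (hallMulRight_one_zero _).symm

theorem range_prod_hallMulRight (m : F × F) :
    Set.range (LinearMap.id.prod (hallMulRight r s m)) = slopeLine r s m 0 := by
  ext ⟨x, y⟩
  simp [slopeLine, hallMulRight_apply, eq_comm]

theorem range_regulusEmb_of_fst_ne_zero {u : F × F} (h1 : u.1 ≠ 0) :
    Set.range (regulusEmb u) = slopeLine r s (u.2 / u.1, 0) 0 := by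
  ext ⟨x, y⟩
  simp only [Set.mem_range, regulusEmb_apply, slopeLine, hallMul, if_pos, add_zero,
    Prod.mk.injEq]
  constructor
  · rintro ⟨v, rfl, rfl⟩
    ext <;> simp <;> field_simp
  · rintro (h : y = _)
    refine ⟨u.1⁻¹ • x, by simp [smul_smul, h1], ?_⟩
    ext <;> simp [h] <;> field_simp

theorem isHallLine_range_regulusEmb {u : F × F} (hu : u ≠ 0) :
    IsHallLine r s (Set.range (regulusEmb u)) := by
  by_cases h1 : u.1 = 0
  · exact .inl ⟨0, range_regulusEmb_of_fst_eq_zero h1 fun h2 => hu (Prod.ext h1 h2)⟩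
  · exact .inr ⟨_, _, range_regulusEmb_of_fst_ne_zero h1⟩

theorem IsHallLine.eq_range_of_zero_mem {ℓ : Set ((F × F) × (F × F))} (hℓ : IsHallLine r s ℓ)
    (h0 : 0 ∈ ℓ) :
    (∃ u : F × F, u ≠ 0 ∧ ℓ = Set.range (regulusEmb u)) ∨
      ∃ m : F × F, m.2 ≠ 0 ∧ ℓ = Set.range (LinearMap.id.prod (hallMulRight r s m)) := by
  rcases hℓ with ⟨c, rfl⟩ | ⟨m, k, rfl⟩
  · obtain rfl : (0 : F × F) = c := h0
    exact .inl ⟨(0, 1), by simp, (range_regulusEmb_of_fst_eq_zero rfl one_ne_zero).symm⟩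
  · obtain rfl : k = 0 := by
      simpa [← hallMulRight_apply] using (h0 : (0 : F × F) = hallMul r s 0 m + k).symm
    by_cases hm : m.2 = 0
    · refine .inl ⟨(1, m.1), by simp, ?_⟩
      rw [range_regulusEmb_of_fst_ne_zero one_ne_zero, div_one, ← hm]
    · exact .inr ⟨m, hm, (range_prod_hallMulRight m).symm⟩

end HallLines

section Intertwining

variable {F M : Type*} [Field F] [AddCommGroup M] [Module F M]

theorem prodMap_comp_regulusEmb {E : Type*} [FunLike E M M] [LinearMapClass E F M M] (L : E)
    (u : F × F) :
    Prod.map L L ∘ regulusEmb u = regulusEmb u ∘ L :=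
  funext fun v => by simp

theorem prodMap_comp_prod_id {L : M → M} {T T' : Module.End F M} (h : ∀ v, L (T v) = T' (L v)) :
    Prod.map L L ∘ LinearMap.id.prod T = LinearMap.id.prod T' ∘ L :=
  funext fun v => by simp [h]

theorem smul_one_add_smul_companion_comp_regulusEmb (r s a b : F) (u : F × F) :
    (a • 1 + b • companion r s : Module.End F (M × M)) ∘ regulusEmb u =
      regulusEmb ((a • 1 + b • companion r s : Module.End F (F × F)) u) :=
  funext fun v => by ext <;> simp <;> module

theorem smul_one_add_smul_companion_comp_prod_id {r s : F} {T : Module.End F M}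
    (hT : T * T = r • T + s • 1) (a b : F) :
    (a • 1 + b • companion r s : Module.End F (M × M)) ∘ LinearMap.id.prod T =
      LinearMap.id.prod T ∘ (a • 1 + b • T : Module.End F M) :=
  funext fun v => by
    ext
    · simp
    · simp [apply_apply_of_mul_self_eq hT]; module

end Intertwining

section Collineations

variable {F : Type*} [Field F] [DecidableEq F] {r s : F}

theorem IsCollineation.comp {φ ψ : (F × F) × (F × F) → (F × F) × (F × F)}
    (hφ : IsCollineation r s φ) (hψ : IsCollineation r s ψ) : IsCollineation r s (φ ∘ ψ) :=
  ⟨hφ.1.comp hψ.1, fun ℓ hℓ => by rw [Set.image_comp]; exact hφ.2 _ (hψ.2 _ hℓ)⟩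

theorem IsHallLine.nonempty {ℓ : Set ((F × F) × (F × F))} (hℓ : IsHallLine r s ℓ) :
    ℓ.Nonempty := by
  rcases hℓ with ⟨c, rfl⟩ | ⟨m, k, rfl⟩
  · exact ⟨(c, 0), rfl⟩
  · exact ⟨(0, hallMul r s 0 m + k), rfl⟩

theorem image_sub_slopeLine (m k : F × F) (v : (F × F) × (F × F)) :
    (· - v) '' slopeLine r s m k = slopeLine r s m (k + hallMul r s v.1 m - v.2) := by
  ext P
  rw [Set.image_sub_right]
  change P.2 + v.2 = hallMul r s (P.1 + v.1) m + k ↔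
    P.2 = hallMul r s P.1 m + (k + hallMul r s v.1 m - v.2)
  simp only [← hallMulRight_apply, map_add]
  constructor <;> intro h
  · rw [eq_sub_of_add_eq h]; abel
  · rw [h]; abel

theorem IsHallLine.image_sub {ℓ : Set ((F × F) × (F × F))} (hℓ : IsHallLine r s ℓ)
    (v : (F × F) × (F × F)) : IsHallLine r s ((· - v) '' ℓ) := by
  rcases hℓ with ⟨c, rfl⟩ | ⟨m, k, rfl⟩
  · exact .inl ⟨_, image_sub_vertLine c v⟩
  · exact .inr ⟨_, _, image_sub_slopeLine m k v⟩

theorem isCollineation_sub (v : (F × F) × (F × F)) : IsCollineation r s (· - v) :=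
  ⟨(Equiv.subRight v).bijective, fun _ hℓ => hℓ.image_sub v⟩

theorem IsCollineation.of_addEquiv (Φ : (F × F) × (F × F) ≃+ (F × F) × (F × F))
    (h : ∀ ℓ, IsHallLine r s ℓ → 0 ∈ ℓ → IsHallLine r s (Φ '' ℓ)) : IsCollineation r s Φ := by
  refine ⟨Φ.bijective, fun ℓ hℓ => ?_⟩
  obtain ⟨P, hP⟩ := hℓ.nonempty
  have hΦ : Φ '' ℓ = (· - -Φ P) '' (Φ '' ((· - P) '' ℓ)) := by
    simp only [Set.image_image, map_sub, sub_neg_eq_add, sub_add_cancel]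
  rw [hΦ]
  exact (h _ (hℓ.image_sub P) ⟨P, hP, sub_self P⟩).image_sub _

theorem isCollineation_prodMap (hf : ∀ t : F, t ^ 2 - r * t - s ≠ 0)
    (L : (F × F) ≃ₗ[F] (F × F)) : IsCollineation r s (Prod.map L L) := by
  refine IsCollineation.of_addEquiv (L.prodCongr L).toAddEquiv fun ℓ hℓ h0 => ?_
  change IsHallLine r s (Prod.map L L '' ℓ)
  rcases hℓ.eq_range_of_zero_mem h0 with ⟨u, hu, rfl⟩ | ⟨m, hm, rfl⟩
  · rw [image_range_eq_range_of_comp_eq L.surjective (prodMap_comp_regulusEmb L u)]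
    exact isHallLine_range_regulusEmb hu
  · set T := L.conjAlgEquiv F (hallMulRight r s m)
    have hT : T * T = r • T + s • 1 := conjAlgEquiv_mul_self (hallMulRight_mul_self hm) L
    have hLT : ∀ v, L (hallMulRight r s m v) = T (L v) := fun v => by simp [T]
    rw [image_range_eq_range_of_comp_eq L.surjective (prodMap_comp_prod_id hLT),
      eq_hallMulRight hf hT, range_prod_hallMulRight]
    exact .inr ⟨_, _, rfl⟩

theorem isCollineation_smul_one_add_smul_companion (hf : ∀ t : F, t ^ 2 - r * t - s ≠ 0)
    {a b : F} (hab : (a, b) ≠ 0) :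
    IsCollineation r s (a • 1 + b • companion r s : Module.End F ((F × F) × (F × F))) := by
  have hΦ := bijective_smul_one_add_smul hf (companion_mul_self (M := F × F) r s) hab
  refine IsCollineation.of_addEquiv (LinearEquiv.ofBijective _ hΦ).toAddEquiv fun ℓ hℓ h0 => ?_
  change IsHallLine r s ((a • 1 + b • companion r s : Module.End F ((F × F) × (F × F))) '' ℓ)
  rcases hℓ.eq_range_of_zero_mem h0 with ⟨u, hu, rfl⟩ | ⟨m, hm, rfl⟩
  · rw [← Set.range_comp, smul_one_add_smul_companion_comp_regulusEmb]
    have hE := (bijective_smul_one_add_smul hf (companion_mul_self r s (M := F)) hab).1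
    exact isHallLine_range_regulusEmb ((map_ne_zero_iff _ hE).mpr hu)
  · have hE := bijective_smul_one_add_smul hf (hallMulRight_mul_self (r := r) (s := s) hm) hab
    rw [image_range_eq_range_of_comp_eq hE.2
      (smul_one_add_smul_companion_comp_prod_id (hallMulRight_mul_self hm) a b),
      range_prod_hallMulRight]
    exact .inr ⟨_, _, rfl⟩

end Collineations

section Normalization

variable {F : Type*} [Field F] [DecidableEq F] {r s : F}

theorem vertLine_ne_slopeLine (c m k : F × F) : vertLine c ≠ slopeLine r s m k := by
  intro h
  have h1 : hallMul r s c m + k + (1, 0) = hallMul r s c m + k :=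
    (h ▸ rfl : (c, hallMul r s c m + k + (1, 0)) ∈ slopeLine r s m k)
  simpa using congrArg Prod.fst (add_eq_left.mp h1)

theorem slope_eq_of_slopeLine_eq {m k m' k' : F × F} (h : slopeLine r s m k = slopeLine r s m' k') :
    m = m' := by
  have mem : ∀ x, (x, hallMulRight r s m x + k) ∈ slopeLine r s m' k' := fun x => h ▸ rfl
  have h0 : hallMulRight r s m 0 + k = hallMulRight r s m' 0 + k' := mem 0
  have h1 : hallMulRight r s m (1, 0) + k = hallMulRight r s m' (1, 0) + k' := mem (1, 0)
  rw [map_zero, map_zero, zero_add, zero_add] at h0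
  rwa [hallMulRight_one_zero, hallMulRight_one_zero, h0, add_left_inj] at h1

theorem exists_collineation_normalize (hf : ∀ t : F, t ^ 2 - r * t - s ≠ 0)
    {ℓ : Set ((F × F) × (F × F))} (hℓ : IsHallLine r s ℓ) {p : (F × F) × (F × F)} (hp : p ∈ ℓ) :
    ∃ φ, IsCollineation r s φ ∧ φ p = 0 ∧ (ℓ ∈ BFlines r s → φ '' ℓ = vertLine 0) ∧
      (ℓ ∈ NBFlines r s → φ '' ℓ = slopeLine r s (0, 1) 0) := by
  rcases hℓ with ⟨c, rfl⟩ | ⟨m, k, rfl⟩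
  · refine ⟨(· - p), isCollineation_sub p, sub_self p, fun _ => ?_,
      fun ⟨m, k, _, h⟩ => absurd h (vertLine_ne_slopeLine c m k)⟩
    rw [image_sub_vertLine, (hp : p.1 = c), sub_self]
  have h0 : (· - p) '' slopeLine r s m k = slopeLine r s m 0 := by
    rw [image_sub_slopeLine, (hp : p.2 = hallMul r s p.1 m + k), add_comm, sub_self]
  by_cases hm : m.2 = 0
  · -- `-m.1 • 1 + companion r s` sends the direction `(1, m.1)` of `ℓ` to `(0, -f(m.1))`
    have hab : ((-m.1, 1) : F × F) ≠ 0 := by simp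
    refine ⟨_ ∘ (· - p), (isCollineation_smul_one_add_smul_companion hf hab).comp
      (isCollineation_sub p), by simp, fun _ => ?_,
      fun ⟨m', k', hm', h⟩ => absurd (slope_eq_of_slopeLine_eq h ▸ hm) hm'⟩
    have hreg : slopeLine r s m 0 = Set.range (regulusEmb (1, m.1)) := by
      rw [range_regulusEmb_of_fst_ne_zero one_ne_zero, div_one, ← hm]
    rw [Set.image_comp, h0, hreg, ← Set.range_comp, smul_one_add_smul_companion_comp_regulusEmb]
    refine range_regulusEmb_of_fst_eq_zero (by simp) ?_
    have h2 : ((-m.1 • 1 + (1 : F) • companion r s : Module.End F (F × F)) (1, m.1)).2 =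
        -(m.1 ^ 2 - r * m.1 - s) := by
      simp only [LinearMap.add_apply, LinearMap.smul_apply, Module.End.one_apply,
        companion_apply, Prod.smul_mk, Prod.snd_add, smul_eq_mul]
      ring
    rw [h2, neg_ne_zero]
    exact hf m.1
  · obtain ⟨L, hL⟩ := exists_conjAlgEquiv_eq (by simp) hf (hallMulRight_mul_self hm)
      (hallMulRight_mul_self (r := r) (s := s) (m := (0, 1)) one_ne_zero)
    have hLm : ∀ v, L (hallMulRight r s m v) = hallMulRight r s (0, 1) (L v) := fun v => by
      simp [← hL, LinearEquiv.conjAlgEquiv_apply]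
    refine ⟨Prod.map L L ∘ (· - p), (isCollineation_prodMap hf L).comp (isCollineation_sub p),
      by ext <;> simp, ?_, fun _ => ?_⟩
    · rintro (⟨c, h⟩ | ⟨m', k', hm', h⟩)
      · exact absurd h.symm (vertLine_ne_slopeLine c m k)
      · exact absurd (slope_eq_of_slopeLine_eq h ▸ hm') hm
    · rw [Set.image_comp, h0, ← range_prod_hallMulRight,
        image_range_eq_range_of_comp_eq L.surjective (prodMap_comp_prod_id hLm),
        range_prod_hallMulRight]

end Normalization

section Transitivity

variable {F : Type*} [Field F] [DecidableEq F] {r s : F}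

theorem exists_prodMap_move (hf : ∀ t : F, t ^ 2 - r * t - s ≠ 0) {n : F × F} (hn : n.2 ≠ 0)
    {ιA ιB : (F × F) →ₗ[F] (F × F) × (F × F)}
    (hA : ∀ L : (F × F) ≃ₗ[F] (F × F),
      (∀ v, L (hallMulRight r s n v) = hallMulRight r s n (L v)) → Prod.map L L ∘ ιA = ιA ∘ L)
    (hB : ∀ L : (F × F) ≃ₗ[F] (F × F),
      (∀ v, L (hallMulRight r s n v) = hallMulRight r s n (L v)) → Prod.map L L ∘ ιB = ιB ∘ L)
    {P Q : (F × F) × (F × F)} (hP : P ∈ Set.range ιA) (hQ : Q ∈ Set.range ιA) (hP0 : P ≠ 0)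
    (hQ0 : Q ≠ 0) :
    ∃ ψ, IsCollineation r s ψ ∧ ψ 0 = 0 ∧ ψ '' Set.range ιA = Set.range ιA ∧
      ψ '' Set.range ιB = Set.range ιB ∧ ψ P = Q := by
  obtain ⟨p, hp, rfl⟩ := exists_ne_zero_apply_eq hP hP0
  obtain ⟨q, hq, rfl⟩ := exists_ne_zero_apply_eq hQ hQ0
  have hR := hallMulRight_mul_self (r := r) (s := s) hn
  obtain ⟨a, b, hab, hpq⟩ := exists_smul_one_add_smul_apply_eq (by simp) hf hR hp hq
  let L := LinearEquiv.ofBijective _ (bijective_smul_one_add_smul hf hR hab)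
  have hL : ∀ v, L (hallMulRight r s n v) = hallMulRight r s n (L v) := fun v => by simp [L]
  refine ⟨Prod.map L L, isCollineation_prodMap hf L, by ext <;> simp,
    image_range_eq_range_of_comp_eq L.surjective (hA L hL),
    image_range_eq_range_of_comp_eq L.surjective (hB L hL), ?_⟩
  exact (congrFun (hA L hL) p).trans (congrArg ιA hpq)

theorem exists_companion_move (hf : ∀ t : F, t ^ 2 - r * t - s ≠ 0) {m m' : F × F}
    (hm : m.2 ≠ 0) (hm' : m'.2 ≠ 0) {P Q : (F × F) × (F × F)}
    (hP : P ∈ Set.range (LinearMap.id.prod (hallMulRight r s m)))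
    (hQ : Q ∈ Set.range (LinearMap.id.prod (hallMulRight r s m))) (hP0 : P ≠ 0) (hQ0 : Q ≠ 0) :
    ∃ ψ, IsCollineation r s ψ ∧ ψ 0 = 0 ∧
      ψ '' Set.range (LinearMap.id.prod (hallMulRight r s m)) =
        Set.range (LinearMap.id.prod (hallMulRight r s m)) ∧
      ψ '' Set.range (LinearMap.id.prod (hallMulRight r s m')) =
        Set.range (LinearMap.id.prod (hallMulRight r s m')) ∧ ψ P = Q := by
  obtain ⟨p, hp, rfl⟩ := exists_ne_zero_apply_eq hP hP0
  obtain ⟨q, hq, rfl⟩ := exists_ne_zero_apply_eq hQ hQ0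
  have hR := hallMulRight_mul_self (r := r) (s := s) hm
  have hR' := hallMulRight_mul_self (r := r) (s := s) hm'
  obtain ⟨a, b, hab, hpq⟩ := exists_smul_one_add_smul_apply_eq (by simp) hf hR hp hq
  have hcomp := smul_one_add_smul_companion_comp_prod_id hR a b
  refine ⟨_, isCollineation_smul_one_add_smul_companion hf hab, map_zero _,
    image_range_eq_range_of_comp_eq (bijective_smul_one_add_smul hf hR hab).2 hcomp,
    image_range_eq_range_of_comp_eq (bijective_smul_one_add_smul hf hR' hab).2
      (smul_one_add_smul_companion_comp_prod_id hR' a b), ?_⟩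
  exact (congrFun hcomp p).trans (congrArg _ hpq)

theorem exists_collineation_fix_move (hf : ∀ t : F, t ^ 2 - r * t - s ≠ 0)
    {A B : Set ((F × F) × (F × F))} (hA : IsHallLine r s A) (hA0 : 0 ∈ A)
    (hB : IsHallLine r s B) (hB0 : 0 ∈ B) {P Q : (F × F) × (F × F)} (hP : P ∈ A) (hQ : Q ∈ A)
    (hP0 : P ≠ 0) (hQ0 : Q ≠ 0) :
    ∃ ψ, IsCollineation r s ψ ∧ ψ 0 = 0 ∧ ψ '' A = A ∧ ψ '' B = B ∧ ψ P = Q := by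
  have h01 : ((0, 1) : F × F).2 ≠ 0 := one_ne_zero
  rcases hA.eq_range_of_zero_mem hA0 with ⟨u, -, rfl⟩ | ⟨m, hm, rfl⟩ <;>
    rcases hB.eq_range_of_zero_mem hB0 with ⟨u', -, rfl⟩ | ⟨m', hm', rfl⟩
  · exact exists_prodMap_move hf h01 (fun L _ => prodMap_comp_regulusEmb L u)
      (fun L _ => prodMap_comp_regulusEmb L u') hP hQ hP0 hQ0
  · exact exists_prodMap_move hf hm' (fun L _ => prodMap_comp_regulusEmb L u)
      (fun _ hL => prodMap_comp_prod_id hL) hP hQ hP0 hQ0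
  · exact exists_prodMap_move hf hm (fun _ hL => prodMap_comp_prod_id hL)
      (fun L _ => prodMap_comp_regulusEmb L u') hP hQ hP0 hQ0
  · exact exists_companion_move hf hm hm' hP hQ hP0 hQ0

end Transitivity

theorem intersecting_pair_normalization_general {F : Type*} [Field F] [DecidableEq F]
    (r s : F)
    (hirr : Irreducible (X ^ 2 - C r * X - C s : F[X]))
    (ℓ1' ℓ2' : Set ((F × F) × (F × F)))
    (h1 : IsHallLine r s ℓ1') (h2 : IsHallLine r s ℓ2')
    (hmeet : (ℓ1' ∩ ℓ2').Nonempty) :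
    ∃ φ, IsCollineation r s φ ∧
      (ℓ1' ∈ BFlines r s → φ '' ℓ1' = vertLine ((0 : F × F))) ∧
      (ℓ1' ∈ NBFlines r s → φ '' ℓ1' = slopeLine r s (0, 1) 0) ∧
      (((0, 0), (0, 0)) : (F × F) × (F × F)) ∈ φ '' ℓ1' ∧
      (((0, 0), (0, 0)) : (F × F) × (F × F)) ∈ φ '' ℓ2' ∧
      (∀ P Q : (F × F) × (F × F), P ∈ φ '' ℓ1' → Q ∈ φ '' ℓ1' →
        P ≠ ((0, 0), (0, 0)) → Q ≠ ((0, 0), (0, 0)) →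
        ∃ ψ, IsCollineation r s ψ ∧ ψ ((0, 0), (0, 0)) = ((0, 0), (0, 0)) ∧
          ψ '' (φ '' ℓ1') = φ '' ℓ1' ∧ ψ '' (φ '' ℓ2') = φ '' ℓ2' ∧ ψ P = Q) ∧
      (∀ P Q : (F × F) × (F × F), P ∈ φ '' ℓ2' → Q ∈ φ '' ℓ2' →
        P ≠ ((0, 0), (0, 0)) → Q ≠ ((0, 0), (0, 0)) →
        ∃ ψ, IsCollineation r s ψ ∧ ψ ((0, 0), (0, 0)) = ((0, 0), (0, 0)) ∧
          ψ '' (φ '' ℓ1') = φ '' ℓ1' ∧ ψ '' (φ '' ℓ2') = φ '' ℓ2' ∧ ψ P = Q) := by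
  have hf := hirr.sq_sub_mul_sub_ne_zero
  obtain ⟨p, hp1, hp2⟩ := hmeet
  obtain ⟨φ, hφ, hφp, hBF, hNBF⟩ := exists_collineation_normalize hf h1 hp1
  have hO1 : (0 : (F × F) × (F × F)) ∈ φ '' ℓ1' := ⟨p, hp1, hφp⟩
  have hO2 : (0 : (F × F) × (F × F)) ∈ φ '' ℓ2' := ⟨p, hp2, hφp⟩
  refine ⟨φ, hφ, hBF, hNBF, hO1, hO2, fun P Q hP hQ hP0 hQ0 => ?_, fun P Q hP hQ hP0 hQ0 => ?_⟩
  · exact exists_collineation_fix_move hf (hφ.2 _ h1) hO1 (hφ.2 _ h2) hO2 hP hQ hP0 hQ0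
  · obtain ⟨ψ, hψ, hψ0, hψ2, hψ1, hψPQ⟩ :=
      exists_collineation_fix_move hf (hφ.2 _ h2) hO2 (hφ.2 _ h1) hO1 hP hQ hP0 hQ0
    exact ⟨ψ, hψ, hψ0, hψ1, hψ2, hψPQ⟩

/-- Any ordered pair of distinct intersecting lines can be mapped by a collineation so that
the first becomes `x = (0,0)` (if it is a BF line) or `y = x·(0,1)` (if it is an NBF line);
the images meet at the origin, and there are collineations fixing the origin and both image
lines acting transitively on the nonzero points of the first image line, and likewise on
the nonzero points of the second image line. -/
theorem intersecting_pair_normalization {F : Type*} [Field F] [Fintype F] [DecidableEq F]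
    (q : ℕ) (hq : Fintype.card F = q) (r s : F)
    (hirr : Irreducible (X ^ 2 - C r * X - C s : F[X]))
    (ℓ1' ℓ2' : Set ((F × F) × (F × F)))
    (h1 : IsHallLine r s ℓ1') (h2 : IsHallLine r s ℓ2') (hne : ℓ1' ≠ ℓ2')
    (hmeet : (ℓ1' ∩ ℓ2').Nonempty) :
    ∃ φ, IsCollineation r s φ ∧
      (ℓ1' ∈ BFlines r s → φ '' ℓ1' = vertLine ((0 : F × F))) ∧
      (ℓ1' ∈ NBFlines r s → φ '' ℓ1' = slopeLine r s (0, 1) 0) ∧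
      (((0, 0), (0, 0)) : (F × F) × (F × F)) ∈ φ '' ℓ1' ∧
      (((0, 0), (0, 0)) : (F × F) × (F × F)) ∈ φ '' ℓ2' ∧
      (∀ P Q : (F × F) × (F × F), P ∈ φ '' ℓ1' → Q ∈ φ '' ℓ1' →
        P ≠ ((0, 0), (0, 0)) → Q ≠ ((0, 0), (0, 0)) →
        ∃ ψ, IsCollineation r s ψ ∧ ψ ((0, 0), (0, 0)) = ((0, 0), (0, 0)) ∧
          ψ '' (φ '' ℓ1') = φ '' ℓ1' ∧ ψ '' (φ '' ℓ2') = φ '' ℓ2' ∧ ψ P = Q) ∧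
      (∀ P Q : (F × F) × (F × F), P ∈ φ '' ℓ2' → Q ∈ φ '' ℓ2' →
        P ≠ ((0, 0), (0, 0)) → Q ≠ ((0, 0), (0, 0)) →
        ∃ ψ, IsCollineation r s ψ ∧ ψ ((0, 0), (0, 0)) = ((0, 0), (0, 0)) ∧
          ψ '' (φ '' ℓ1') = φ '' ℓ1' ∧ ψ '' (φ '' ℓ2') = φ '' ℓ2' ∧ ψ P = Q) :=
  intersecting_pair_normalization_general r s hirr ℓ1' ℓ2' h1 h2 hmeet
end
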